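/- arXiv:1911.07945 — 6 statements merged into one kernel-verified Lean document; each statement's English description precedes it below -/
import Mathlib

section
/- Let n ≥ 1 and let μ_1,…,μ_n be atomless Borel probability measures on ℝ supported on [0,∞), each with finite mean. Let X_1,…,X_n, X̃_1,…,X̃_n be 2n mutually independent real random variables with X_i and X̃_i each having law μ_i. Set the threshold T = max_i X̃_i and let the gambler's reward R be X_τ where τ is the least index i with X_i > T (and R = 0 if no such index exists). Then E[R] ≥ (1/2)·E[max_i X_i]. -/
open MeasureTheory ProbabilityTheory

/-- The gambler's reward: accept the first value `X i ω` strictly exceeding the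
threshold `T ω`; reward `0` if no value exceeds the threshold. The "first" index is
the least `i : Fin n` with `X i ω > T ω`. -/
noncomputable def singleSampleReward {Ω : Type*} {n : ℕ} (X : Fin n → Ω → ℝ)
    (T : Ω → ℝ) (ω : Ω) : ℝ :=
  if h : (Finset.univ.filter (fun i => T ω < X i ω)).Nonempty then
    X ((Finset.univ.filter (fun i => T ω < X i ω)).min' h) ω
  else 0

open scoped ENNReal

namespace SSPI

variable {n : ℕ}

def ec (c : Fin n → Bool) : (Fin n ⊕ Fin n) → (Fin n ⊕ Fin n) :=
  Sum.elim (fun i => if c i then Sum.inr i else Sum.inl i)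
           (fun i => if c i then Sum.inl i else Sum.inr i)

lemma ec_invol (c : Fin n → Bool) : ∀ k, ec c (ec c k) = k := by
  rintro (i | i) <;> by_cases h : c i <;> simp [ec, h]

lemma ec_inj (c : Fin n → Bool) : Function.Injective (ec c) :=
  Function.Involutive.injective (ec_invol c)

lemma ec_apply_ne (c : Fin n → Bool) (i j : Fin n) : ec c (Sum.inl i) ≠ ec c (Sum.inr j) := by
  intro h; exact absurd (ec_inj c h) (by simp)

noncomputable def Mx (hne : (Finset.univ : Finset (Fin n)).Nonempty)
    (w : Fin n ⊕ Fin n → ℝ) : ℝ :=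
  Finset.univ.sup' hne (fun i => w (Sum.inl i))

noncomputable def Tv (hne : (Finset.univ : Finset (Fin n)).Nonempty)
    (w : Fin n ⊕ Fin n → ℝ) : ℝ :=
  Finset.univ.sup' hne (fun i => w (Sum.inr i))

noncomputable def Gv (hne : (Finset.univ : Finset (Fin n)).Nonempty)
    (w : Fin n ⊕ Fin n → ℝ) : ℝ :=
  singleSampleReward (fun i w => w (Sum.inl i)) (Tv hne) w

variable {hne : (Finset.univ : Finset (Fin n)).Nonempty}

lemma Tv_lt_Gv {w : Fin n ⊕ Fin n → ℝ} (h : Tv hne w < Mx hne w) : Tv hne w < Gv hne w := by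
  obtain ⟨i0, -, hi0⟩ := Finset.exists_mem_eq_sup' hne (fun i => w (Sum.inl i))
  have hne2 : (Finset.univ.filter (fun i => Tv hne w < w (Sum.inl i))).Nonempty := by
    refine ⟨i0, Finset.mem_filter.2 ⟨Finset.mem_univ _, ?_⟩⟩
    rw [← hi0]; exact h
  have hmem := Finset.min'_mem _ hne2
  rw [Finset.mem_filter] at hmem
  rw [Gv, singleSampleReward, dif_pos hne2]
  exact hmem.2

lemma Gv_eq {w : Fin n ⊕ Fin n → ℝ} {k : Fin n} (hk : Tv hne w < w (Sum.inl k))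
    (hfirst : ∀ j, j < k → ¬ (Tv hne w < w (Sum.inl j))) :
    Gv hne w = w (Sum.inl k) := by
  have hne2 : (Finset.univ.filter (fun i => Tv hne w < w (Sum.inl i))).Nonempty :=
    ⟨k, Finset.mem_filter.2 ⟨Finset.mem_univ _, hk⟩⟩
  have hmem := Finset.min'_mem _ hne2
  rw [Finset.mem_filter] at hmem
  have h1 : Finset.min' _ hne2 ≤ k :=
    Finset.min'_le _ k (Finset.mem_filter.2 ⟨Finset.mem_univ k, hk⟩)
  have h2 : ¬ (Finset.min' _ hne2 < k) := fun hlt => hfirst _ hlt hmem.2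
  have : Finset.min' _ hne2 = k := le_antisymm h1 (not_lt.1 h2)
  rw [Gv, singleSampleReward, dif_pos hne2, this]

lemma Mx_comp_neg (c : Fin n → Bool) (w : Fin n ⊕ Fin n → ℝ) :
    Mx hne (w ∘ ec (fun i => !(c i))) = Tv hne (w ∘ ec c) := by
  unfold Mx Tv
  congr 1; funext i
  by_cases h : c i <;> simp [ec, h]

lemma Tv_comp_neg (c : Fin n → Bool) (w : Fin n ⊕ Fin n → ℝ) :
    Tv hne (w ∘ ec (fun i => !(c i))) = Mx hne (w ∘ ec c) := by
  unfold Mx Tv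
  congr 1; funext i
  by_cases h : c i <;> simp [ec, h]

lemma Mx_ne_Tv {w : Fin n ⊕ Fin n → ℝ} (hinj : Function.Injective w) (c : Fin n → Bool) :
    Mx hne (w ∘ ec c) ≠ Tv hne (w ∘ ec c) := by
  obtain ⟨i0, -, hi0⟩ := Finset.exists_mem_eq_sup' hne (fun i => (w ∘ ec c) (Sum.inl i))
  obtain ⟨j0, -, hj0⟩ := Finset.exists_mem_eq_sup' hne (fun i => (w ∘ ec c) (Sum.inr i))
  rw [Mx, hi0, Tv, hj0]
  intro h
  exact ec_apply_ne c i0 j0 (hinj h)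

lemma pair_vals (c : Fin n → Bool) (w : Fin n ⊕ Fin n → ℝ) (i : Fin n) :
    ((w ∘ ec c) (Sum.inl i) = w (Sum.inl i) ∧ (w ∘ ec c) (Sum.inr i) = w (Sum.inr i)) ∨
    ((w ∘ ec c) (Sum.inl i) = w (Sum.inr i) ∧ (w ∘ ec c) (Sum.inr i) = w (Sum.inl i)) := by
  by_cases h : c i
  · right; constructor <;> simp [ec, h]
  · left; constructor <;> simp [ec, h]

/-- The key counting lemma. -/
lemma count {w : Fin n ⊕ Fin n → ℝ} (hinj : Function.Injective w) (y : ℝ) :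
    (Finset.univ.filter (fun c : Fin n → Bool => y < Mx hne (w ∘ ec c))).card ≤
      2 * (Finset.univ.filter (fun c : Fin n → Bool => y < Gv hne (w ∘ ec c))).card := by
  classical
  have hSleT : ∀ (c : Fin n → Bool) (i : Fin n),
      (w ∘ ec c) (Sum.inr i) ≤ Tv hne (w ∘ ec c) := by
    intro c i; rw [Tv]; exact Finset.le_sup' (fun i => (w ∘ ec c) (Sum.inr i)) (Finset.mem_univ i)
  have hXleM : ∀ (c : Fin n → Bool) (i : Fin n),
      (w ∘ ec c) (Sum.inl i) ≤ Mx hne (w ∘ ec c) := by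
    intro c i; rw [Mx]; exact Finset.le_sup' (fun i => (w ∘ ec c) (Sum.inl i)) (Finset.mem_univ i)
  have hacc : ∀ c : Fin n → Bool, Tv hne (w ∘ ec c) < Mx hne (w ∘ ec c) →
      y < Tv hne (w ∘ ec c) → y < Gv hne (w ∘ ec c) :=
    fun c h hy => hy.trans (Tv_lt_Gv h)
  by_cases hA : ∃ i, y < w (Sum.inl i) ∧ y < w (Sum.inr i)
  · -- some pair is entirely high: threshold always exceeds y
    obtain ⟨iA, hA1, hA2⟩ := hA
    have hTy : ∀ c : Fin n → Bool, y < Tv hne (w ∘ ec c) := by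
      intro c
      refine lt_of_lt_of_le ?_ (hSleT c iA)
      rcases pair_vals c w iA with ⟨-, h2⟩ | ⟨-, h2⟩ <;> rw [h2] <;> assumption
    have hsplit := Finset.card_filter_add_card_filter_not
      (s := (Finset.univ : Finset (Fin n → Bool)))
      (p := fun c => Tv hne (w ∘ ec c) < Mx hne (w ∘ ec c))
    have hbij : (Finset.univ.filter fun c : Fin n → Bool =>
        ¬ (Tv hne (w ∘ ec c) < Mx hne (w ∘ ec c))).card =
        (Finset.univ.filter fun c : Fin n → Bool =>
        Tv hne (w ∘ ec c) < Mx hne (w ∘ ec c)).card := by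
      apply Finset.card_bij' (fun c _ => fun i => !(c i)) (fun c _ => fun i => !(c i))
      · intro c hc
        rw [Finset.mem_filter] at hc ⊢
        refine ⟨Finset.mem_univ _, ?_⟩
        rw [Mx_comp_neg, Tv_comp_neg]
        exact lt_of_le_of_ne (not_lt.1 hc.2) (Mx_ne_Tv hinj c)
      · intro c hc
        rw [Finset.mem_filter] at hc ⊢
        refine ⟨Finset.mem_univ _, ?_⟩
        rw [Mx_comp_neg, Tv_comp_neg]
        exact not_lt.2 (le_of_lt hc.2)
      · intro c _; funext i; simp
      · intro c _; funext i; simp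
    have hsub : (Finset.univ.filter fun c : Fin n → Bool =>
        Tv hne (w ∘ ec c) < Mx hne (w ∘ ec c)) ⊆
        (Finset.univ.filter fun c : Fin n → Bool => y < Gv hne (w ∘ ec c)) := by
      intro c hc
      rw [Finset.mem_filter] at hc ⊢
      exact ⟨Finset.mem_univ _, hacc c hc.2 (hTy c)⟩
    calc (Finset.univ.filter (fun c : Fin n → Bool => y < Mx hne (w ∘ ec c))).card
        ≤ (Finset.univ : Finset (Fin n → Bool)).card := Finset.card_filter_le _ _
      _ = 2 * (Finset.univ.filter fun c : Fin n → Bool =>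
          Tv hne (w ∘ ec c) < Mx hne (w ∘ ec c)).card := by omega
      _ ≤ 2 * (Finset.univ.filter fun c : Fin n → Bool => y < Gv hne (w ∘ ec c)).card := by
          exact Nat.mul_le_mul_left 2 (Finset.card_le_card hsub)
  · by_cases hP : ∃ i, y < w (Sum.inl i) ∨ y < w (Sum.inr i)
    swap
    · -- everything low : max never exceeds y
      push_neg at hP
      have : (Finset.univ.filter (fun c : Fin n → Bool => y < Mx hne (w ∘ ec c))).card = 0 := by
        rw [Finset.card_eq_zero, Finset.filter_eq_empty_iff]
        intro c _
        rw [not_lt, Mx]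
        apply Finset.sup'_le
        intro i _
        rcases pair_vals c w i with ⟨h1, -⟩ | ⟨h1, -⟩ <;> rw [h1]
        · exact (hP i).1
        · exact (hP i).2
      omega
    · obtain ⟨iP, hiP⟩ := hP
      push_neg at hA
      set PH : Finset (Fin n) :=
        Finset.univ.filter (fun i => y < w (Sum.inl i) ∨ y < w (Sum.inr i)) with hPHdef
      have hPHne : PH.Nonempty := ⟨iP, Finset.mem_filter.2 ⟨Finset.mem_univ _, hiP⟩⟩
      set k := PH.min' hPHne with hkdef
      have hkPH : k ∈ PH := PH.min'_mem _
      have hkhigh : y < w (Sum.inl k) ∨ y < w (Sum.inr k) := (Finset.mem_filter.1 hkPH).2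
      have hlowlt : ∀ j, j < k → w (Sum.inl j) ≤ y ∧ w (Sum.inr j) ≤ y := by
        intro j hj
        by_contra hcon
        rw [not_and_or, not_le, not_le] at hcon
        exact absurd (Finset.min'_le _ j (Finset.mem_filter.2 ⟨Finset.mem_univ _, hcon⟩))
          (not_le.2 hj)
      -- when the threshold is low, the value of pair k is high
      have hXk : ∀ c : Fin n → Bool, Tv hne (w ∘ ec c) ≤ y →
          y < (w ∘ ec c) (Sum.inl k) := by
        intro c hc
        have hs : (w ∘ ec c) (Sum.inr k) ≤ y := (hSleT c k).trans hc
        rcases pair_vals c w k with ⟨h1, h2⟩ | ⟨h1, h2⟩ <;> rw [h1] <;> rw [h2] at hs <;>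
          rcases hkhigh with h | h <;> first | exact h | linarith
      -- the six subsets of the cube
      set S1 := Finset.univ.filter (fun c : Fin n → Bool =>
        y < Mx hne (w ∘ ec c) ∧ y < Tv hne (w ∘ ec c)) with hS1def
      set S2 := Finset.univ.filter (fun c : Fin n → Bool =>
        y < Mx hne (w ∘ ec c) ∧ ¬ (y < Tv hne (w ∘ ec c))) with hS2def
      set S1' := Finset.univ.filter (fun c : Fin n → Bool =>
        (y < Mx hne (w ∘ ec c) ∧ y < Tv hne (w ∘ ec c)) ∧
          Tv hne (w ∘ ec c) < Mx hne (w ∘ ec c)) with hS1'def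
      set S1'' := Finset.univ.filter (fun c : Fin n → Bool =>
        (y < Mx hne (w ∘ ec c) ∧ y < Tv hne (w ∘ ec c)) ∧
          ¬ (Tv hne (w ∘ ec c) < Mx hne (w ∘ ec c))) with hS1''def
      set good := Finset.univ.filter (fun c : Fin n → Bool =>
        (y < Mx hne (w ∘ ec c) ∧ ¬ (y < Tv hne (w ∘ ec c))) ∧
          ∀ j, j < k → (w ∘ ec c) (Sum.inl j) ≤ Tv hne (w ∘ ec c)) with hgooddef
      set bad := Finset.univ.filter (fun c : Fin n → Bool =>
        (y < Mx hne (w ∘ ec c) ∧ ¬ (y < Tv hne (w ∘ ec c))) ∧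
          ¬ ∀ j, j < k → (w ∘ ec c) (Sum.inl j) ≤ Tv hne (w ∘ ec c)) with hbaddef
      have hMsplit : S1.card + S2.card =
          (Finset.univ.filter (fun c : Fin n → Bool => y < Mx hne (w ∘ ec c))).card := by
        have h := Finset.card_filter_add_card_filter_not
          (s := Finset.univ.filter (fun c : Fin n → Bool => y < Mx hne (w ∘ ec c)))
          (p := fun c => y < Tv hne (w ∘ ec c))
        have e1 : (Finset.univ.filter (fun c : Fin n → Bool =>
            y < Mx hne (w ∘ ec c))).filter (fun c => y < Tv hne (w ∘ ec c)) = S1 := by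
          rw [hS1def]; ext c
          simp only [Finset.mem_filter, Finset.mem_univ, true_and]
        have e2 : (Finset.univ.filter (fun c : Fin n → Bool =>
            y < Mx hne (w ∘ ec c))).filter (fun c => ¬ (y < Tv hne (w ∘ ec c))) = S2 := by
          rw [hS2def]; ext c
          simp only [Finset.mem_filter, Finset.mem_univ, true_and]
        rw [e1, e2] at h
        exact h
      have hS1split : S1'.card + S1''.card = S1.card := by
        have h := Finset.card_filter_add_card_filter_not
          (s := S1) (p := fun c => Tv hne (w ∘ ec c) < Mx hne (w ∘ ec c))
        have e1 : S1.filter (fun c => Tv hne (w ∘ ec c) < Mx hne (w ∘ ec c)) = S1' := by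
          rw [hS1def, hS1'def]; ext c
          simp only [Finset.mem_filter, Finset.mem_univ, true_and]
        have e2 : S1.filter (fun c => ¬ (Tv hne (w ∘ ec c) < Mx hne (w ∘ ec c))) = S1'' := by
          rw [hS1def, hS1''def]; ext c
          simp only [Finset.mem_filter, Finset.mem_univ, true_and]
        rw [e1, e2] at h
        exact h
      have hS2split : good.card + bad.card = S2.card := by
        have h := Finset.card_filter_add_card_filter_not
          (s := S2) (p := fun c => ∀ j, j < k → (w ∘ ec c) (Sum.inl j) ≤ Tv hne (w ∘ ec c))
        have e1 : S2.filter (fun c => ∀ j, j < k →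
            (w ∘ ec c) (Sum.inl j) ≤ Tv hne (w ∘ ec c)) = good := by
          rw [hS2def, hgooddef]; ext c
          simp only [Finset.mem_filter, Finset.mem_univ, true_and]
        have e2 : S2.filter (fun c => ¬ ∀ j, j < k →
            (w ∘ ec c) (Sum.inl j) ≤ Tv hne (w ∘ ec c)) = bad := by
          rw [hS2def, hbaddef]; ext c
          simp only [Finset.mem_filter, Finset.mem_univ, true_and]
        rw [e1, e2] at h
        exact h
      have hS1bij : S1''.card = S1'.card := by
        apply Finset.card_bij' (fun c _ => fun i => !(c i)) (fun c _ => fun i => !(c i))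
        · intro c hc
          rw [hS1''def, Finset.mem_filter] at hc
          rw [hS1'def, Finset.mem_filter]
          refine ⟨Finset.mem_univ _, ?_⟩
          rw [Mx_comp_neg, Tv_comp_neg]
          obtain ⟨-, ⟨h1, h2⟩, h3⟩ := hc
          exact ⟨⟨h2, h1⟩, lt_of_le_of_ne (not_lt.1 h3) (Mx_ne_Tv hinj c)⟩
        · intro c hc
          rw [hS1'def, Finset.mem_filter] at hc
          rw [hS1''def, Finset.mem_filter]
          refine ⟨Finset.mem_univ _, ?_⟩
          rw [Mx_comp_neg, Tv_comp_neg]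
          obtain ⟨-, ⟨h1, h2⟩, h3⟩ := hc
          exact ⟨⟨h2, h1⟩, not_lt.2 (le_of_lt h3)⟩
        · intro c _; funext i; simp
        · intro c _; funext i; simp
      -- the largest low value
      set lows : Finset (Fin n ⊕ Fin n) :=
        Finset.univ.filter (fun m => w m ≤ y) with hlowsdef
      have hlne : lows.Nonempty := by
        rcases hkhigh with h | h
        · exact ⟨Sum.inr k, Finset.mem_filter.2 ⟨Finset.mem_univ _, (hA k h)⟩⟩
        · by_cases h2 : y < w (Sum.inl k)
          · exact ⟨Sum.inr k, Finset.mem_filter.2 ⟨Finset.mem_univ _, (hA k h2)⟩⟩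
          · exact ⟨Sum.inl k, Finset.mem_filter.2 ⟨Finset.mem_univ _, not_lt.1 h2⟩⟩
      obtain ⟨lstar, hlmem, hlmax⟩ := Finset.exists_max_image lows w hlne
      have hlstar_low : w lstar ≤ y := (Finset.mem_filter.1 hlmem).2
      set j0 : Fin n := Sum.elim id id lstar with hj0def
      have hlpair : lstar = Sum.inl j0 ∨ lstar = Sum.inr j0 := by
        rcases lstar with j | j
        · left; rfl
        · right; rfl
      -- lstar's value shows up on one side of pair j0
      have hlsides : ∀ c : Fin n → Bool, (w ∘ ec c) (Sum.inl j0) = w lstar ∨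
          (w ∘ ec c) (Sum.inr j0) = w lstar := by
        intro c
        rcases pair_vals c w j0 with ⟨h1, h2⟩ | ⟨h1, h2⟩ <;> rcases hlpair with h | h
        · left; rw [h1, h]
        · right; rw [h2, h]
        · right; rw [h2, h]
        · left; rw [h1, h]
      -- if lstar's value is on the sample side, all early values are below the threshold
      have hgood' : ∀ c : Fin n → Bool, (w ∘ ec c) (Sum.inr j0) = w lstar →
          ∀ j, j < k → (w ∘ ec c) (Sum.inl j) ≤ Tv hne (w ∘ ec c) := by
        intro c hs j hj
        have h1 : (w ∘ ec c) (Sum.inl j) ≤ w lstar := by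
          apply hlmax
          rw [hlowsdef, Finset.mem_filter]
          refine ⟨Finset.mem_univ _, ?_⟩
          rcases pair_vals c w j with ⟨h1, -⟩ | ⟨h1, -⟩
          · show (w ∘ ec c) (Sum.inl j) ≤ y
            rw [h1]; exact (hlowlt j hj).1
          · show (w ∘ ec c) (Sum.inl j) ≤ y
            rw [h1]; exact (hlowlt j hj).2
        calc (w ∘ ec c) (Sum.inl j) ≤ w lstar := h1
          _ = (w ∘ ec c) (Sum.inr j0) := hs.symm
          _ ≤ Tv hne (w ∘ ec c) := hSleT c j0
      -- good configurations accept the high value of pair k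
      have hgoodsub : good ⊆ Finset.univ.filter
          (fun c : Fin n → Bool => y < Gv hne (w ∘ ec c)) := by
        intro c hc
        rw [hgooddef, Finset.mem_filter] at hc
        obtain ⟨-, ⟨hMy, hTy⟩, hpre⟩ := hc
        have hTle : Tv hne (w ∘ ec c) ≤ y := not_lt.1 hTy
        have hXk' := hXk c hTle
        have hG : Gv hne (w ∘ ec c) = (w ∘ ec c) (Sum.inl k) :=
          Gv_eq (lt_of_le_of_lt hTle hXk')
            (fun j hj hlt => absurd (hpre j hj) (not_le.2 hlt))
        rw [Finset.mem_filter]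
        exact ⟨Finset.mem_univ _, by rw [hG]; exact hXk'⟩
      have hbadcard : bad.card ≤ good.card := by
        by_cases hj0PH : j0 ∈ PH
        · -- pair j0 contains a high value: then bad is empty
          have hbademp : bad = ∅ := by
            rw [hbaddef, Finset.filter_eq_empty_iff]
            rintro c - ⟨⟨hMy, hTy⟩, hnpre⟩
            apply hnpre
            apply hgood' c
            have hsle : (w ∘ ec c) (Sum.inr j0) ≤ y := (hSleT c j0).trans (not_lt.1 hTy)
            rcases hlsides c with h | h
            · exfalso
              have hhigh := (Finset.mem_filter.1 hj0PH).2
              rcases pair_vals c w j0 with ⟨h1, h2⟩ | ⟨h1, h2⟩ <;>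
                rw [h] at h1 <;> rw [← h1] at hhigh <;> rw [← h2] at hhigh <;>
                rcases hhigh with hh | hh <;> linarith [hlstar_low]
            · exact h
          rw [hbademp]
          simp
        · -- pair j0 is entirely low: flip its coin to injectively map bad into good
          have hkj0 : k ≠ j0 := fun h => hj0PH (h ▸ hkPH)
          have hj0low : w (Sum.inl j0) ≤ y ∧ w (Sum.inr j0) ≤ y := by
            rw [hPHdef, Finset.mem_filter] at hj0PH
            push_neg at hj0PH
            exact ⟨(hj0PH (Finset.mem_univ _)).1, (hj0PH (Finset.mem_univ _)).2⟩
          set flip : (Fin n → Bool) → (Fin n → Bool) :=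
            fun c => Function.update c j0 (!(c j0)) with hflipdef
          have hflipX : ∀ (c : Fin n → Bool) (i : Fin n), i ≠ j0 →
              (w ∘ ec (flip c)) (Sum.inl i) = (w ∘ ec c) (Sum.inl i) := by
            intro c i h
            have : flip c i = c i := Function.update_of_ne h _ _
            by_cases hci : c i <;> simp [ec, this, hci]
          have hflipS : ∀ (c : Fin n → Bool) (i : Fin n), i ≠ j0 →
              (w ∘ ec (flip c)) (Sum.inr i) = (w ∘ ec c) (Sum.inr i) := by
            intro c i h
            have : flip c i = c i := Function.update_of_ne h _ _
            by_cases hci : c i <;> simp [ec, this, hci]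
          have hflipSj0 : ∀ c : Fin n → Bool,
              (w ∘ ec (flip c)) (Sum.inr j0) = (w ∘ ec c) (Sum.inl j0) := by
            intro c
            have : flip c j0 = !(c j0) := Function.update_self _ _ _
            by_cases hci : c j0 <;> simp [ec, this, hci]
          apply Finset.card_le_card_of_injOn flip
          · intro c hc
            simp only [Finset.mem_coe, hbaddef, Finset.mem_filter] at hc
            obtain ⟨-, ⟨hMy, hTy⟩, hnpre⟩ := hc
            have hTle : Tv hne (w ∘ ec c) ≤ y := not_lt.1 hTy
            have hXj0 : (w ∘ ec c) (Sum.inl j0) = w lstar := by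
              rcases hlsides c with h | h
              · exact h
              · exact absurd (hgood' c h) hnpre
            have hT' : Tv hne (w ∘ ec (flip c)) ≤ y := by
              rw [Tv]
              apply Finset.sup'_le
              intro i _
              by_cases h : i = j0
              · rw [h, hflipSj0 c, hXj0]
                exact hlstar_low
              · rw [hflipS c i h]
                exact (hSleT c i).trans hTle
            have hM' : y < Mx hne (w ∘ ec (flip c)) := by
              refine lt_of_lt_of_le ?_ (hXleM (flip c) k)
              rw [hflipX c k hkj0]
              exact hXk c hTle
            have hpre' : ∀ j, j < k → (w ∘ ec (flip c)) (Sum.inl j) ≤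
                Tv hne (w ∘ ec (flip c)) := by
              apply hgood' (flip c)
              rw [hflipSj0 c, hXj0]
            rw [Finset.mem_coe, hgooddef, Finset.mem_filter]
            exact ⟨Finset.mem_univ _, ⟨hM', not_lt.2 hT'⟩, hpre'⟩
          · intro c1 h1 c2 h2 heq
            have hinv : ∀ c : Fin n → Bool, flip (flip c) = c := by
              intro c; funext i
              by_cases h : i = j0
              · rw [h, hflipdef]
                simp [Function.update_self]
              · rw [hflipdef]
                simp [Function.update_of_ne h]
            rw [← hinv c1, ← hinv c2, heq]
      -- put everything together
      have hdisj : Disjoint S1' good := by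
        rw [Finset.disjoint_left]
        intro c h1 h2
        rw [hS1'def, Finset.mem_filter] at h1
        rw [hgooddef, Finset.mem_filter] at h2
        exact h2.2.1.2 h1.2.1.2
      have hS1'sub : S1' ⊆ Finset.univ.filter
          (fun c : Fin n → Bool => y < Gv hne (w ∘ ec c)) := by
        intro c hc
        rw [hS1'def, Finset.mem_filter] at hc
        rw [Finset.mem_filter]
        exact ⟨Finset.mem_univ _, hacc c hc.2.2 hc.2.1.2⟩
      have hunion : (S1' ∪ good).card ≤ (Finset.univ.filter
          (fun c : Fin n → Bool => y < Gv hne (w ∘ ec c))).card :=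
        Finset.card_le_card (Finset.union_subset hS1'sub hgoodsub)
      rw [Finset.card_union_of_disjoint hdisj] at hunion
      omega

lemma Gv_nonneg {w : Fin n ⊕ Fin n → ℝ} (hpos : ∀ k, 0 ≤ w k) : 0 ≤ Gv hne w := by
  rw [Gv, singleSampleReward]
  split
  · exact hpos _
  · exact le_refl 0

lemma Mx_nonneg {w : Fin n ⊕ Fin n → ℝ} (hpos : ∀ k, 0 ≤ w k) : 0 ≤ Mx hne w := by
  obtain ⟨i, -⟩ := id hne
  calc (0:ℝ) ≤ w (Sum.inl i) := hpos _
    _ ≤ Mx hne w := by rw [Mx]; exact Finset.le_sup' (fun i => w (Sum.inl i)) (Finset.mem_univ i)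

/-- The deterministic core: summing over all `2^n` swap configurations,
the reward collects at least half the maximum. -/
lemma det {w : Fin n ⊕ Fin n → ℝ} (hinj : Function.Injective w) (hpos : ∀ k, 0 ≤ w k) :
    ∑ c : Fin n → Bool, Mx hne (w ∘ ec c) ≤ 2 * ∑ c : Fin n → Bool, Gv hne (w ∘ ec c) := by
  classical
  have hposc : ∀ c : Fin n → Bool, ∀ k, 0 ≤ (w ∘ ec c) k := fun c k => hpos _
  have hMpos : ∀ c : Fin n → Bool, 0 ≤ Mx hne (w ∘ ec c) := fun c => Mx_nonneg (hposc c)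
  have hGpos : ∀ c : Fin n → Bool, 0 ≤ Gv hne (w ∘ ec c) := fun c => Gv_nonneg (hposc c)
  rw [← ENNReal.ofReal_le_ofReal_iff (mul_nonneg (by norm_num) (Finset.sum_nonneg fun c _ => hGpos c))]
  rw [ENNReal.ofReal_mul (by norm_num : (0:ℝ) ≤ 2),
    (by norm_num : ENNReal.ofReal 2 = 2)]
  rw [ENNReal.ofReal_sum_of_nonneg (fun c _ => hMpos c),
    ENNReal.ofReal_sum_of_nonneg (fun c _ => hGpos c)]
  have hvol : ∀ r : ℝ, ENNReal.ofReal r = ∫⁻ y : ℝ, (Set.Ico 0 r).indicator 1 y := by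
    intro r
    rw [lintegral_indicator_one measurableSet_Ico, Real.volume_Ico, sub_zero]
  simp only [hvol]
  rw [← lintegral_finset_sum _ (fun c _ => (measurable_one.indicator measurableSet_Ico)),
    ← lintegral_finset_sum _ (fun c _ => (measurable_one.indicator measurableSet_Ico)),
    ← lintegral_const_mul 2 (Finset.measurable_sum _
      (fun c _ => (measurable_one.indicator measurableSet_Ico)))]
  apply lintegral_mono
  intro y
  by_cases hy : 0 ≤ y
  · have hind : ∀ r : ℝ, (Set.Ico 0 r).indicator (1 : ℝ → ℝ≥0∞) y
        = if y < r then 1 else 0 := by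
      intro r
      rw [Set.indicator_apply]
      by_cases h : y < r
      · rw [if_pos h, if_pos (Set.mem_Ico.2 ⟨hy, h⟩)]; rfl
      · rw [if_neg h, if_neg (fun hc => h (Set.mem_Ico.1 hc).2)]
    simp only [hind]
    rw [Finset.sum_boole, Finset.sum_boole]
    have hcnt := count (hne := hne) hinj y
    calc ((Finset.univ.filter (fun c : Fin n → Bool => y < Mx hne (w ∘ ec c))).card : ℝ≥0∞)
        ≤ ((2 * (Finset.univ.filter (fun c : Fin n → Bool =>
            y < Gv hne (w ∘ ec c))).card : ℕ) : ℝ≥0∞) := by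
          exact_mod_cast Nat.cast_le.2 hcnt
      _ = 2 * ((Finset.univ.filter (fun c : Fin n → Bool =>
            y < Gv hne (w ∘ ec c))).card : ℝ≥0∞) := by push_cast; ring
  · have hind : ∀ r : ℝ, (Set.Ico 0 r).indicator (1 : ℝ → ℝ≥0∞) y = 0 := by
      intro r
      rw [Set.indicator_apply, if_neg (fun hc => hy (Set.mem_Ico.1 hc).1)]
    simp only [hind]
    simp

lemma measurable_Tv : Measurable (Tv (n := n) hne) := by
  unfold Tv
  have h := Finset.measurable_sup' (f := fun (i : Fin n) (w : Fin n ⊕ Fin n → ℝ) =>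
    w (Sum.inr i)) hne (fun i _ => measurable_pi_apply (Sum.inr i))
  have he : (fun w : Fin n ⊕ Fin n → ℝ => Finset.univ.sup' hne fun i => w (Sum.inr i))
      = Finset.univ.sup' hne (fun (i : Fin n) (w : Fin n ⊕ Fin n → ℝ) => w (Sum.inr i)) := by
    funext w; rw [Finset.sup'_apply]
  rw [he]; exact h

lemma measurable_Mx : Measurable (Mx (n := n) hne) := by
  unfold Mx
  have h := Finset.measurable_sup' (f := fun (i : Fin n) (w : Fin n ⊕ Fin n → ℝ) =>
    w (Sum.inl i)) hne (fun i _ => measurable_pi_apply (Sum.inl i))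
  have he : (fun w : Fin n ⊕ Fin n → ℝ => Finset.univ.sup' hne fun i => w (Sum.inl i))
      = Finset.univ.sup' hne (fun (i : Fin n) (w : Fin n ⊕ Fin n → ℝ) => w (Sum.inl i)) := by
    funext w; rw [Finset.sup'_apply]
  rw [he]; exact h

lemma Gv_eq_sum (w : Fin n ⊕ Fin n → ℝ) :
    Gv hne w = ∑ i : Fin n, if (Tv hne w < w (Sum.inl i) ∧
      ∀ j, j < i → ¬ (Tv hne w < w (Sum.inl j))) then w (Sum.inl i) else 0 := by
  classical
  by_cases h : (Finset.univ.filter (fun i => Tv hne w < w (Sum.inl i))).Nonempty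
  · set i0 := (Finset.univ.filter (fun i => Tv hne w < w (Sum.inl i))).min' h with hi0
    have hmem := Finset.min'_mem _ h
    rw [← hi0] at hmem
    rw [Finset.mem_filter] at hmem
    have hcond : Tv hne w < w (Sum.inl i0) ∧
        ∀ j, j < i0 → ¬ (Tv hne w < w (Sum.inl j)) := by
      refine ⟨hmem.2, fun j hj hcon => ?_⟩
      exact absurd (Finset.min'_le _ j (Finset.mem_filter.2 ⟨Finset.mem_univ _, hcon⟩))
        (not_le.2 hj)
    have hGv : Gv hne w = w (Sum.inl i0) := Gv_eq hcond.1 hcond.2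
    rw [hGv, Finset.sum_eq_single i0]
    · rw [if_pos hcond]
    · intro i _ hne2
      rw [if_neg]
      rintro ⟨h1, h2⟩
      rcases lt_or_gt_of_ne hne2 with hlt | hgt
      · exact (hcond.2 i hlt) h1
      · exact (h2 i0 hgt) hcond.1
    · intro hcon
      exact absurd (Finset.mem_univ i0) hcon
  · have hall : ∀ i, ¬ (Tv hne w < w (Sum.inl i)) := by
      intro i hcon
      exact h ⟨i, Finset.mem_filter.2 ⟨Finset.mem_univ _, hcon⟩⟩
    have hGv : Gv hne w = 0 := by
      rw [Gv, singleSampleReward, dif_neg h]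
    rw [hGv]
    symm
    apply Finset.sum_eq_zero
    intro i _
    rw [if_neg (fun hc => hall i hc.1)]

lemma measurable_Gv : Measurable (Gv (n := n) hne) := by
  have : Gv (n := n) hne = fun w => ∑ i : Fin n, if (Tv hne w < w (Sum.inl i) ∧
      ∀ j, j < i → ¬ (Tv hne w < w (Sum.inl j))) then w (Sum.inl i) else 0 := by
    funext w; exact Gv_eq_sum w
  rw [this]
  apply Finset.measurable_sum
  intro i _
  have hs1 : ∀ i : Fin n, MeasurableSet {w : Fin n ⊕ Fin n → ℝ |
      Tv hne w < w (Sum.inl i)} :=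
    fun i => measurableSet_lt measurable_Tv (measurable_pi_apply _)
  have hs : MeasurableSet {w : Fin n ⊕ Fin n → ℝ | Tv hne w < w (Sum.inl i) ∧
      ∀ j, j < i → ¬ (Tv hne w < w (Sum.inl j))} := by
    apply MeasurableSet.inter (hs1 i)
    show MeasurableSet {w : Fin n ⊕ Fin n → ℝ | ∀ j, j < i → ¬ (Tv hne w < w (Sum.inl j))}
    have : {w : Fin n ⊕ Fin n → ℝ | ∀ j, j < i → ¬ (Tv hne w < w (Sum.inl j))}
        = ⋂ j : Fin n, {w | j < i → ¬ (Tv hne w < w (Sum.inl j))} := by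
      ext w; simp
    rw [this]
    apply MeasurableSet.iInter
    intro j
    by_cases hj : j < i
    · simp only [hj, true_implies]
      exact (hs1 j).compl
    · simp only [hj, false_implies]
      exact MeasurableSet.univ
  exact Measurable.ite hs (measurable_pi_apply _) measurable_const

lemma abs_Mx_le (w : Fin n ⊕ Fin n → ℝ) : |Mx hne w| ≤ ∑ k : Fin n ⊕ Fin n, |w k| := by
  obtain ⟨i0, -, h⟩ := Finset.exists_mem_eq_sup' hne (fun i => w (Sum.inl i))
  rw [Mx, h]
  exact Finset.single_le_sum (f := fun k : Fin n ⊕ Fin n => |w k|)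
    (fun k _ => abs_nonneg _) (Finset.mem_univ (Sum.inl i0))

lemma abs_Gv_le (w : Fin n ⊕ Fin n → ℝ) : |Gv hne w| ≤ ∑ k : Fin n ⊕ Fin n, |w k| := by
  rw [Gv, singleSampleReward]
  split
  · exact Finset.single_le_sum (f := fun k : Fin n ⊕ Fin n => |w k|)
      (fun k _ => abs_nonneg _) (Finset.mem_univ _)
  · simp only [abs_zero]
    exact Finset.sum_nonneg (fun k _ => abs_nonneg _)

end SSPI

open SSPI

/-- **Single Sample prophet inequality.** Let `μ 1, …, μ n` be atomless Borel
probability measures on `ℝ`, supported on `[0, ∞)` and with finite mean. Let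
`X 1, …, X n, X̃ 1, …, X̃ n` be `2n` mutually independent random variables with
`X i` and `X̃ i` each distributed according to `μ i`. If the gambler sets the
threshold `T = max_i X̃ i` and accepts the first `X i` with `X i > T` (getting
reward `0` if no such `i` exists), then the expected reward is at least half of
`E[max_i X i]`. -/
theorem single_sample_prophet_inequality
    {Ω : Type*} [MeasurableSpace Ω] (P : Measure Ω) [IsProbabilityMeasure P]
    (n : ℕ) (hn : 0 < n) (μ : Fin n → Measure ℝ)
    (hprob : ∀ i, IsProbabilityMeasure (μ i))
    (hatomless : ∀ i, NoAtoms (μ i))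
    (hsupp : ∀ i, μ i (Set.Iio 0) = 0)
    (hmean : ∀ i, Integrable (fun x => x) (μ i))
    (X Xt : Fin n → Ω → ℝ)
    (hXmeas : ∀ i, Measurable (X i)) (hXtmeas : ∀ i, Measurable (Xt i))
    (hXlaw : ∀ i, Measure.map (X i) P = μ i)
    (hXtlaw : ∀ i, Measure.map (Xt i) P = μ i)
    (hindep : iIndepFun
      (Sum.elim X Xt) P) :
    (1 / 2 : ℝ) *
        (∫ ω, (Finset.univ.sup'
          (Finset.univ_nonempty_iff.mpr (Fin.pos_iff_nonempty.mp hn))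
          (fun i => X i ω)) ∂P)
      ≤ ∫ ω, singleSampleReward X
          (fun ω => Finset.univ.sup'
            (Finset.univ_nonempty_iff.mpr (Fin.pos_iff_nonempty.mp hn))
            (fun i => Xt i ω)) ω ∂P := by
  classical
  have hne : (Finset.univ : Finset (Fin n)).Nonempty :=
    Finset.univ_nonempty_iff.mpr (Fin.pos_iff_nonempty.mp hn)
  haveI : ∀ i, IsProbabilityMeasure (μ i) := hprob
  set ν : Fin n ⊕ Fin n → Measure ℝ := Sum.elim μ μ with hνdef
  haveI hνprob : ∀ k, IsProbabilityMeasure (ν k) := by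
    rintro (i | i) <;> exact hprob i
  set Z : (Fin n ⊕ Fin n) → Ω → ℝ := Sum.elim X Xt with hZdef
  have hZmeas : ∀ k, Measurable (Z k) := by
    rintro (i | i)
    exacts [hXmeas i, hXtmeas i]
  have hZlaw : ∀ k, Measure.map (Z k) P = ν k := by
    rintro (i | i)
    exacts [hXlaw i, hXtlaw i]
  set V : Ω → (Fin n ⊕ Fin n) → ℝ := fun ω k => Z k ω with hVdef
  have hVmeas : Measurable V := measurable_pi_lambda _ hZmeas
  set π : Measure ((Fin n ⊕ Fin n) → ℝ) := Measure.pi ν with hπdef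
  have hmapV : Measure.map V P = π := by
    rw [hπdef]
    refine (Measure.pi_eq fun s hs => ?_).symm
    rw [Measure.map_apply hVmeas (MeasurableSet.univ_pi hs)]
    have hpre : V ⁻¹' (Set.univ.pi s) = ⋂ k, Z k ⁻¹' (s k) := by
      ext ω
      simp [Set.mem_univ_pi, hVdef]
    have hpre2 : V ⁻¹' (Set.univ.pi s) = ⋂ k ∈ Finset.univ, Z k ⁻¹' (s k) := by
      rw [hpre]; simp
    rw [hpre2]
    rw [(iIndepFun_iff_measure_inter_preimage_eq_mul.mp hindep) Finset.univ
      (fun k _ => hs k)]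
    exact Finset.prod_congr rfl fun k _ => by
      rw [← hZlaw k, Measure.map_apply (hZmeas k) (hs k)]
  -- the swap maps preserve π
  have hν_ec : ∀ (c : Fin n → Bool) (k : Fin n ⊕ Fin n), ν (ec c k) = ν k := by
    rintro c (i | i) <;> by_cases h : c i <;> simp [ec, h, hνdef]
  have hswapmeas : ∀ c : Fin n → Bool,
      Measurable (fun w : (Fin n ⊕ Fin n) → ℝ => w ∘ ec c) :=
    fun c => measurable_pi_lambda _ (fun k => measurable_pi_apply (ec c k))
  have hswap : ∀ c : Fin n → Bool,
      MeasurePreserving (fun w : (Fin n ⊕ Fin n) → ℝ => w ∘ ec c) π π := by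
    intro c
    refine ⟨hswapmeas c, ?_⟩
    rw [hπdef]
    refine (Measure.pi_eq fun s hs => ?_).symm
    rw [Measure.map_apply (hswapmeas c) (MeasurableSet.univ_pi hs)]
    have hpre : (fun w : (Fin n ⊕ Fin n) → ℝ => w ∘ ec c) ⁻¹' (Set.univ.pi s)
        = Set.univ.pi (fun j => s (ec c j)) := by
      ext w
      simp only [Set.mem_preimage, Set.mem_univ_pi, Function.comp_apply]
      constructor
      · intro h j
        have := h (ec c j)
        rwa [ec_invol] at this
      · intro h k
        have := h (ec c k)
        rwa [ec_invol] at this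
    rw [hpre, Measure.pi_pi]
    exact Fintype.prod_equiv (Function.Involutive.toPerm (ec c) (ec_invol c))
      (fun j => ν j (s (ec c j))) (fun k => ν k (s k))
      (fun k => by
        show ν k (s (ec c k)) = ν (ec c k) (s (ec c k))
        rw [hν_ec c k])
  -- integrability
  have hcoordP : ∀ k, Integrable (Z k) P := by
    intro k
    have h1 : Integrable (fun x : ℝ => x) (ν k) := by
      rcases k with i | i <;> exact hmean i
    rw [← hZlaw k] at h1
    exact (integrable_map_measure aestronglyMeasurable_id (hZmeas k).aemeasurable).mp h1
  have hcoord : ∀ k, Integrable (fun w : (Fin n ⊕ Fin n) → ℝ => w k) π := by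
    intro k
    rw [← hmapV]
    exact (integrable_map_measure (measurable_pi_apply k).aestronglyMeasurable
      hVmeas.aemeasurable).mpr (hcoordP k)
  have hB : Integrable (fun w : (Fin n ⊕ Fin n) → ℝ => ∑ k, |w k|) π :=
    integrable_finset_sum _ (fun k _ => (hcoord k).abs)
  have hMint : Integrable (Mx hne) π := by
    refine hB.mono' (measurable_Mx).aestronglyMeasurable (ae_of_all _ fun w => ?_)
    rw [Real.norm_eq_abs]
    exact abs_Mx_le w
  have hGint : Integrable (Gv hne) π := by
    refine hB.mono' (measurable_Gv).aestronglyMeasurable (ae_of_all _ fun w => ?_)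
    rw [Real.norm_eq_abs]
    exact abs_Gv_le w
  have hMcint : ∀ c : Fin n → Bool, Integrable (fun w => Mx hne (w ∘ ec c)) π :=
    fun c => ((hswap c).integrable_comp measurable_Mx.aestronglyMeasurable).mpr hMint
  have hGcint : ∀ c : Fin n → Bool, Integrable (fun w => Gv hne (w ∘ ec c)) π :=
    fun c => ((hswap c).integrable_comp measurable_Gv.aestronglyMeasurable).mpr hGint
  -- a.e. hypotheses for the deterministic lemma
  have hae_pos : ∀ᵐ w ∂π, ∀ k, 0 ≤ w k := by
    rw [ae_all_iff]
    intro k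
    rw [ae_iff]
    have hset : {w : (Fin n ⊕ Fin n) → ℝ | ¬ 0 ≤ w k}
        = Function.eval k ⁻¹' (Set.Iio 0) := by
      ext w; simp [not_le]
    rw [hset]
    apply Measure.pi_eval_preimage_null
    rcases k with i | i <;> exact hsupp i
  have hae_inj : ∀ᵐ w ∂π, Function.Injective w := by
    have hpair : ∀ k l : Fin n ⊕ Fin n, k ≠ l → ∀ᵐ w ∂π, w k ≠ w l := by
      intro k l hkl
      rw [ae_iff]
      have hD : MeasurableSet {p : ℝ × ℝ | p.1 = p.2} := by
        have : {p : ℝ × ℝ | p.1 = p.2} = (fun p : ℝ × ℝ => p.1 - p.2) ⁻¹' {0} := by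
          ext p; simp [sub_eq_zero]
        rw [this]
        exact (measurable_fst.sub measurable_snd) (measurableSet_singleton 0)
      have hset : {w : (Fin n ⊕ Fin n) → ℝ | ¬ w k ≠ w l}
          = (fun w : (Fin n ⊕ Fin n) → ℝ => (w k, w l)) ⁻¹' {p : ℝ × ℝ | p.1 = p.2} := by
        ext w; simp
      rw [hset, ← hmapV,
        Measure.map_apply hVmeas (((measurable_pi_apply k).prodMk
          (measurable_pi_apply l)) hD)]
      have : V ⁻¹' ((fun w : (Fin n ⊕ Fin n) → ℝ => (w k, w l)) ⁻¹'
          {p : ℝ × ℝ | p.1 = p.2}) = (fun ω => (Z k ω, Z l ω)) ⁻¹'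
          {p : ℝ × ℝ | p.1 = p.2} := rfl
      rw [this, ← Measure.map_apply ((hZmeas k).prodMk (hZmeas l)) hD]
      have hind2 : IndepFun (Z k) (Z l) P := hindep.indepFun hkl
      rw [(indepFun_iff_map_prod_eq_prod_map_map (hZmeas k).aemeasurable
        (hZmeas l).aemeasurable).mp hind2]
      rw [hZlaw k, hZlaw l]
      haveI : NoAtoms (ν l) := by rcases l with i | i <;> exact hatomless i
      rw [Measure.prod_apply hD]
      have hslice : ∀ x : ℝ, (Prod.mk x ⁻¹' {p : ℝ × ℝ | p.1 = p.2}) = {x} := by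
        intro x; ext z; simp [eq_comm]
      simp only [hslice]
      have h0 : ∀ x : ℝ, ν l {x} = 0 := this.measure_singleton
      simp only [h0, lintegral_zero]
    have hall : ∀ᵐ w ∂π, ∀ k l : Fin n ⊕ Fin n, k ≠ l → w k ≠ w l := by
      rw [ae_all_iff]
      intro k
      rw [ae_all_iff]
      intro l
      by_cases hkl : k = l
      · subst hkl
        filter_upwards with w h
        exact absurd rfl h
      · filter_upwards [hpair k l hkl] with w h _
        exact h
    filter_upwards [hall] with w h
    intro a b hab
    by_contra hne'
    exact h a b hne' hab
  -- reduce both integrals to π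
  have hIM : ∫ ω, (Finset.univ.sup'
      (Finset.univ_nonempty_iff.mpr (Fin.pos_iff_nonempty.mp hn))
      (fun i => X i ω)) ∂P = ∫ w, Mx hne w ∂π := by
    rw [← hmapV, integral_map hVmeas.aemeasurable
      measurable_Mx.aestronglyMeasurable]
    rfl
  have hIR : ∫ ω, singleSampleReward X
      (fun ω => Finset.univ.sup'
        (Finset.univ_nonempty_iff.mpr (Fin.pos_iff_nonempty.mp hn))
        (fun i => Xt i ω)) ω ∂P = ∫ w, Gv hne w ∂π := by
    rw [← hmapV, integral_map hVmeas.aemeasurable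
      measurable_Gv.aestronglyMeasurable]
    rfl
  rw [hIM, hIR]
  -- main estimate over the cube of swaps
  have hN : (0:ℝ) < (Finset.univ : Finset (Fin n → Bool)).card := by
    rw [Finset.card_univ]
    exact_mod_cast Fintype.card_pos
  have hterm : ∀ (f : ((Fin n ⊕ Fin n) → ℝ) → ℝ), Measurable f →
      ∀ c : Fin n → Bool, ∫ w, f (w ∘ ec c) ∂π = ∫ w, f w ∂π := by
    intro f hf c
    have h := integral_map (μ := π) (φ := fun w : (Fin n ⊕ Fin n) → ℝ => w ∘ ec c)
      (f := f) (hswapmeas c).aemeasurable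
      (by rw [(hswap c).map_eq]; exact hf.aestronglyMeasurable)
    rw [(hswap c).map_eq] at h
    exact h.symm
  have e1 : ∑ c : Fin n → Bool, ∫ w, Mx hne (w ∘ ec c) ∂π
      = ((Finset.univ : Finset (Fin n → Bool)).card : ℝ) * ∫ w, Mx hne w ∂π := by
    rw [Finset.sum_congr rfl (fun c _ => hterm (Mx hne) measurable_Mx c),
      Finset.sum_const, nsmul_eq_mul]
  have e2 : ∑ c : Fin n → Bool, ∫ w, Gv hne (w ∘ ec c) ∂π
      = ((Finset.univ : Finset (Fin n → Bool)).card : ℝ) * ∫ w, Gv hne w ∂π := by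
    rw [Finset.sum_congr rfl (fun c _ => hterm (Gv hne) measurable_Gv c),
      Finset.sum_const, nsmul_eq_mul]
  have emain : ∫ w, (∑ c : Fin n → Bool, Mx hne (w ∘ ec c)) ∂π
      ≤ ∫ w, 2 * (∑ c : Fin n → Bool, Gv hne (w ∘ ec c)) ∂π := by
    refine integral_mono_ae (integrable_finset_sum _ (fun c _ => hMcint c))
      ((integrable_finset_sum _ (fun c _ => hGcint c)).const_mul 2) ?_
    filter_upwards [hae_inj, hae_pos] with w hinj hpos
    exact det hinj hpos
  rw [integral_const_mul, integral_finset_sum _ (fun c _ => hMcint c),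
    integral_finset_sum _ (fun c _ => hGcint c), e1, e2] at emain
  have h2 : ((Finset.univ : Finset (Fin n → Bool)).card : ℝ) * (∫ w, Mx hne w ∂π)
      ≤ ((Finset.univ : Finset (Fin n → Bool)).card : ℝ) * (2 * ∫ w, Gv hne w ∂π) := by
    linarith
  have h3 := le_of_mul_le_mul_left h2 hN
  linarith
end

section
/- In the setup below, the expected value of max_i X_i over the randomness of the coin flips equals Σ_{j=1}^{j*−1} W_j·2^{−j} + W_{j*}·2^{−(j*−1)}. -/
/-- Maximum of a function on `Fin n`, for `n > 0`. -/
noncomputable def finMax {n : ℕ} (hn : 0 < n) (f : Fin n → ℝ) : ℝ :=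
  Finset.univ.sup' (Finset.univ_nonempty_iff.mpr (Fin.pos_iff_nonempty.mp hn)) f

/-- The gambler's reward when the values `X` arrive in the order given by the
permutation `π` and the gambler accepts the first arriving value strictly
exceeding the threshold `max_i X̃ i` (reward `0` if no value does). -/
noncomputable def gamblerReward {n : ℕ} (hn : 0 < n) (π : Equiv.Perm (Fin n))
    (X Xt : Fin n → ℝ) : ℝ :=
  if h : (Finset.univ.filter (fun k => finMax hn Xt < X (π k))).Nonempty then
    X (π ((Finset.univ.filter (fun k => finMax hn Xt < X (π k))).min' h))
  else 0

/-! The values `W 1, …, W (jstar - 1)` are the `Y`-values of the distinct pairs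
`ι 1, …, ι (jstar - 1)`, and `W jstar = Z (ι jstar)` is the largest `Z`-value; all other values
lie below it. So the prophet's reward is `W j` for the first `j < jstar` whose coin `C (ι j)`
shows heads, and `W jstar` when all those coins show tails (the pair `ι jstar` is among them, so
its `Z`-value is then drawn). Among independent fair coins the first heads comes at position `j`
with probability `2⁻ʲ`, and `jstar - 1` tails occur with probability `2^{-(jstar - 1)}`. -/

open Finset

section FirstHeads

variable {α : Type*} [Fintype α] [DecidableEq α]

theorem card_filter_forall_mem_eq (s : Finset α) (v : α → Bool) :
    #{C : α → Bool | ∀ i ∈ s, C i = v i} = 2 ^ (Fintype.card α - #s) := by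
  have hpi : ({C : α → Bool | ∀ i ∈ s, C i = v i} : Finset (α → Bool))
      = Fintype.piFinset fun i => if i ∈ s then {v i} else univ := by
    ext C
    simp only [mem_filter, mem_univ, true_and, Fintype.mem_piFinset]
    refine forall_congr' fun i => ?_
    split_ifs <;> simp [*]
  rw [hpi, Fintype.card_piFinset]
  simp only [apply_ite card, card_singleton, card_univ, Fintype.card_bool]
  rw [prod_ite, prod_const_one, one_mul, prod_const, filter_not, filter_mem_eq_inter, univ_inter,
    ← compl_eq_univ_sdiff, card_compl]

theorem card_filter_findIdx_eq_of_lt {l : List α} (hl : l.Nodup) {j : ℕ} (hj : j < l.length) :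
    #{C : α → Bool | l.findIdx C = j} = 2 ^ (Fintype.card α - (j + 1)) := by
  have hfiber : ({C : α → Bool | l.findIdx C = j} : Finset (α → Bool))
      = ({C | ∀ x ∈ (l.take (j + 1)).toFinset, C x = decide (x = l[j])} : Finset (α → Bool)) := by
    ext C
    simp only [mem_filter, mem_univ, true_and, List.findIdx_eq hj, List.mem_toFinset,
      List.mem_take_iff_getElem]
    constructor
    · rintro ⟨hCj, hC⟩ x ⟨m, hm, rfl⟩
      rcases (Nat.lt_succ_iff.mp (lt_min_iff.mp hm).1).lt_or_eq with hmj | rfl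
      · simpa [hl.getElem_inj_iff, hmj.ne] using hC m hmj
      · simpa using hCj
    · intro hC
      refine ⟨by simpa using hC _ ⟨j, by omega, rfl⟩, fun m hmj => ?_⟩
      simpa [hl.getElem_inj_iff, hmj.ne] using hC _ ⟨m, by omega, rfl⟩
  rw [hfiber, card_filter_forall_mem_eq,
    List.toFinset_card_of_nodup (hl.sublist (List.take_sublist _ _)), List.length_take,
    min_eq_left hj]

theorem card_filter_findIdx_eq_length {l : List α} (hl : l.Nodup) :
    #{C : α → Bool | l.findIdx C = l.length} = 2 ^ (Fintype.card α - l.length) := by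
  have hfiber : ({C : α → Bool | l.findIdx C = l.length} : Finset (α → Bool))
      = ({C | ∀ x ∈ l.toFinset, C x = false} : Finset (α → Bool)) := by
    simp only [List.findIdx_eq_length, List.mem_toFinset]
  rw [hfiber, card_filter_forall_mem_eq l.toFinset (fun _ => false), List.toFinset_card_of_nodup hl]

theorem sum_apply_findIdx_div {l : List α} (hl : l.Nodup) (v : ℕ → ℝ) :
    (∑ C : α → Bool, v (l.findIdx C)) / 2 ^ Fintype.card α
      = ∑ j ∈ range l.length, v j / 2 ^ (j + 1) + v l.length / 2 ^ l.length := by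
  have hlen := hl.length_le_card
  have hmaps : ∀ C ∈ (univ : Finset (α → Bool)), l.findIdx C ∈ range (l.length + 1) :=
    fun C _ => mem_range_succ_iff.mpr List.findIdx_le_length
  rw [← sum_fiberwise_of_maps_to hmaps, sum_range_succ, add_div, sum_div]
  have hfiber : ∀ j, ∑ C ∈ univ with l.findIdx C = j, v (l.findIdx C)
      = #{C : α → Bool | l.findIdx C = j} * v j := by
    intro j
    rw [sum_congr rfl fun C hC => by rw [(mem_filter.mp hC).2], sum_const, nsmul_eq_mul]
  have hpow : ∀ k ≤ Fintype.card α,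
      (2 : ℝ) ^ (Fintype.card α - k) / 2 ^ Fintype.card α = 1 / 2 ^ k := by
    intro k hk
    rw [pow_sub₀ _ two_ne_zero hk]
    field_simp
  simp only [hfiber]
  congr 1
  · refine sum_congr rfl fun j hj => ?_
    rw [card_filter_findIdx_eq_of_lt hl (mem_range.mp hj)]
    push_cast
    rw [mul_div_right_comm, hpow _ (by have := mem_range.mp hj; omega)]
    ring
  · rw [card_filter_findIdx_eq_length hl]
    push_cast
    rw [mul_div_right_comm, hpow _ hlen]
    ring

end FirstHeads

section Pivot

variable {n : ℕ} {Y Z : Fin n → ℝ} {W : ℕ → ℝ} {ι : ℕ → Fin n} {jstar : ℕ}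
  (hYZ : ∀ i, Z i < Y i) (hdistinct : Function.Injective (Sum.elim Y Z))
  (hWanti : StrictAntiOn W (Set.Icc 1 (2 * n)))
  (hWrange : (Icc 1 (2 * n)).image W = univ.image Y ∪ univ.image Z)
  (hι : ∀ j ∈ Icc 1 (2 * n), W j = Y (ι j) ∨ W j = Z (ι j))
  (hjstar : IsLeast {j : ℕ | j ∈ Icc 1 (2 * n) ∧ ∃ ℓ, 1 ≤ ℓ ∧ ℓ < j ∧ ι ℓ = ι j} jstar)

include hWrange in
theorem exists_W_eq_of_mem {x : ℝ} (hx : x ∈ univ.image Y ∪ univ.image Z) :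
    ∃ m ∈ Icc 1 (2 * n), W m = x := by
  rwa [← hWrange, mem_image] at hx

include hjstar in
theorem ι_ne_of_lt_jstar {a b : ℕ} (ha : 1 ≤ a) (hab : a < b) (hb : b < jstar) : ι a ≠ ι b :=
  fun h => (hjstar.2 ⟨mem_Icc.mpr ⟨by omega, by linarith [(mem_Icc.mp hjstar.1.1).2]⟩,
    a, ha, hab, h⟩).not_gt hb

include hjstar in
theorem nodup_ofFn_ι : (List.ofFn fun m : Fin (jstar - 1) => ι (m + 1)).Nodup := by
  refine List.nodup_ofFn.mpr fun a b hab => ?_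
  rcases lt_trichotomy a b with h | h | h
  · exact absurd hab (ι_ne_of_lt_jstar hjstar (by omega) (by simpa) (by omega))
  · exact h
  · exact absurd hab.symm (ι_ne_of_lt_jstar hjstar (by omega) (by simpa) (by omega))

include hYZ hdistinct hWanti hWrange hι hjstar

theorem W_eq_Y_of_lt_jstar {j : ℕ} (hj1 : 1 ≤ j) (hj : j < jstar) : W j = Y (ι j) := by
  have hj2n : j ∈ Icc 1 (2 * n) := mem_Icc.mpr ⟨hj1, by linarith [(mem_Icc.mp hjstar.1.1).2]⟩
  refine (hι j hj2n).resolve_right fun hWZ => ?_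
  obtain ⟨m, hm, hWm⟩ :=
    exists_W_eq_of_mem hWrange (mem_union_left _ (mem_image_of_mem Y (mem_univ (ι j))))
  have hmj : m < j := (hWanti.lt_iff_gt (by simpa using hj2n) (by simpa using hm)).mp
    (by rw [hWm, hWZ]; exact hYZ _)
  rcases hι m hm with hWmY | hWmZ
  · exact ι_ne_of_lt_jstar hjstar (mem_Icc.mp hm).1 hmj hj
      (hdistinct.comp Sum.inl_injective (hWmY.symm.trans hWm))
  · exact Sum.inl_ne_inr (hdistinct (hWm.symm.trans hWmZ))

theorem W_jstar_eq_Z : W jstar = Z (ι jstar) := by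
  obtain ⟨hjstar2n, ℓ, hℓ1, hℓj, hιℓ⟩ := hjstar.1
  refine (hι jstar hjstar2n).resolve_left fun hWY => ?_
  have hWℓ : W ℓ = W jstar := by
    rw [W_eq_Y_of_lt_jstar hYZ hdistinct hWanti hWrange hι hjstar hℓ1 hℓj, hιℓ, hWY]
  exact (hWanti (by simp at hjstar2n ⊢; omega) (by simpa using hjstar2n) hℓj).ne' hWℓ

theorem le_W_of_forall_lt_eq_false (C : Fin n → Bool) {k : ℕ} (hk1 : 1 ≤ k) (hk : k ≤ jstar)
    (hC : ∀ m, 1 ≤ m → m < k → C (ι m) = false) (i : Fin n) :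
    (if C i then Y i else Z i) ≤ W k := by
  have hk2n : k ∈ Set.Icc 1 (2 * n) := ⟨hk1, hk.trans (mem_Icc.mp hjstar.1.1).2⟩
  obtain ⟨m, hm, hWm⟩ := exists_W_eq_of_mem hWrange (x := if C i then Y i else Z i)
    (by split_ifs <;> simp)
  rw [← hWm]
  refine hWanti.antitoneOn hk2n (by simpa using hm) (not_lt.mp fun hmk => ?_)
  have hWmY := W_eq_Y_of_lt_jstar hYZ hdistinct hWanti hWrange hι hjstar (mem_Icc.mp hm).1
    (hmk.trans_le hk)
  split_ifs at hWm with hCi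
  · have hi : i = ι m := hdistinct.comp Sum.inl_injective (hWm.symm.trans hWmY)
    have hCm := hC m (mem_Icc.mp hm).1 hmk
    simp [← hi, hCi] at hCm
  · exact Sum.inl_ne_inr (hdistinct (hWmY.symm.trans hWm))

theorem finMax_eq_W_findIdx (hn : 0 < n) (C : Fin n → Bool) :
    finMax hn (fun i => if C i then Y i else Z i)
      = W ((List.ofFn fun m : Fin (jstar - 1) => ι (m + 1)).findIdx C + 1) := by
  set l := List.ofFn fun m : Fin (jstar - 1) => ι (m + 1)
  obtain ⟨hjstar2n, ℓ, hℓ1, hℓj, hιℓ⟩ := hjstar.1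
  have hlen : l.length = jstar - 1 := List.length_ofFn
  have hk : l.findIdx C + 1 ≤ jstar := by have := l.findIdx_le_length (p := C); omega
  have htails : ∀ m, 1 ≤ m → m < l.findIdx C + 1 → C (ι m) = false := by
    intro m hm1 hm
    have := List.not_of_lt_findIdx (show m - 1 < l.findIdx C by omega)
    simpa [l, Nat.sub_add_cancel hm1] using this
  unfold finMax
  refine le_antisymm (sup'_le _ _ fun i _ =>
    le_W_of_forall_lt_eq_false hYZ hdistinct hWanti hWrange hι hjstar C (by omega) hk htails i) ?_
  rcases l.findIdx_le_length.lt_or_eq with hlt | heq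
  · have hCk : C (ι (l.findIdx C + 1)) := by simpa [l] using List.findIdx_getElem (w := hlt)
    refine le_sup'_of_le _ (mem_univ (ι (l.findIdx C + 1))) ?_
    rw [if_pos hCk, W_eq_Y_of_lt_jstar hYZ hdistinct hWanti hWrange hι hjstar (by omega) (by omega)]
  · rw [heq, hlen, Nat.sub_add_cancel (by omega : 1 ≤ jstar)]
    have hCℓ : C (ι jstar) = false := hιℓ ▸ htails ℓ hℓ1 (by omega)
    refine le_sup'_of_le _ (mem_univ (ι jstar)) ?_
    rw [if_neg (by simp [hCℓ]), W_jstar_eq_Z hYZ hdistinct hWanti hWrange hι hjstar]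

end Pivot

theorem prophet_expected_reward_general
    -- the `2n` values: `Y i > Z i ≥ 0` for each pair `i`, all distinct
    (n : ℕ) (hn : 0 < n) (Y Z : Fin n → ℝ)
    (hYZ : ∀ i, Z i < Y i)
    (hdistinct : Function.Injective (Sum.elim Y Z))
    -- `W 1 > W 2 > … > W (2n)` is the decreasing relabeling of the `2n` values
    (W : ℕ → ℝ) (hWanti : StrictAntiOn W (Set.Icc 1 (2 * n)))
    (hWrange : (Finset.Icc 1 (2 * n)).image W
      = Finset.univ.image Y ∪ Finset.univ.image Z)
    -- `ι j` is the index of the pair containing `W j`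
    (ι : ℕ → Fin n)
    (hι : ∀ j ∈ Finset.Icc 1 (2 * n), W j = Y (ι j) ∨ W j = Z (ι j))
    -- `jstar` is the pivotal index: the least `j` whose pair index repeats an earlier one
    (jstar : ℕ)
    (hjstar : IsLeast {j : ℕ | j ∈ Finset.Icc 1 (2 * n)
      ∧ ∃ ℓ, 1 ≤ ℓ ∧ ℓ < j ∧ ι ℓ = ι j} jstar)
    :
    (∑ C : Fin n → Bool,
        finMax hn (fun i => if C i then Y i else Z i)) / 2 ^ n
      = (∑ j ∈ Finset.Icc 1 (jstar - 1), W j / 2 ^ j)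
          + W jstar / 2 ^ (jstar - 1) := by
  have hjstar1 : 1 ≤ jstar := (mem_Icc.mp hjstar.1.1).1
  have hmean := sum_apply_findIdx_div (nodup_ofFn_ι hjstar) fun j => W (j + 1)
  rw [Fintype.card_fin, List.length_ofFn] at hmean
  simp_rw [finMax_eq_W_findIdx hYZ hdistinct hWanti hWrange hι hjstar hn]
  rw [hmean, Nat.sub_add_cancel hjstar1, range_eq_Ico, sum_Ico_add' (fun j => W j / 2 ^ j),
    Ico_add_one_right_eq_Icc]

/-- **Prophet's expected reward** (Proposition 3.3 of the paper). With the `2n`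
distinct values `Y i > Z i ≥ 0` relabeled in decreasing order as
`W 1 > … > W (2n)` and pivotal index `jstar`, the expectation over the `n`
independent fair coin flips `C` (where `X i = Y i` if `C i` is heads and
`X i = Z i` otherwise) of `max_i X i` equals
`∑_{j=1}^{jstar-1} W j / 2^j + W jstar / 2^(jstar-1)`. -/
theorem prophet_expected_reward
    -- the `2n` values: `Y i > Z i ≥ 0` for each pair `i`, all distinct
    (n : ℕ) (hn : 0 < n) (Y Z : Fin n → ℝ)
    (hZnonneg : ∀ i, 0 ≤ Z i) (hYZ : ∀ i, Z i < Y i)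
    (hdistinct : Function.Injective (Sum.elim Y Z))
    -- `W 1 > W 2 > … > W (2n)` is the decreasing relabeling of the `2n` values
    (W : ℕ → ℝ) (hWanti : StrictAntiOn W (Set.Icc 1 (2 * n)))
    (hWrange : (Finset.Icc 1 (2 * n)).image W
      = Finset.univ.image Y ∪ Finset.univ.image Z)
    -- `ι j` is the index of the pair containing `W j`
    (ι : ℕ → Fin n)
    (hι : ∀ j ∈ Finset.Icc 1 (2 * n), W j = Y (ι j) ∨ W j = Z (ι j))
    -- `jstar` is the pivotal index: the least `j` whose pair index repeats an earlier one
    (jstar : ℕ)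
    (hjstar : IsLeast {j : ℕ | j ∈ Finset.Icc 1 (2 * n)
      ∧ ∃ ℓ, 1 ≤ ℓ ∧ ℓ < j ∧ ι ℓ = ι j} jstar)
    :
    (∑ C : Fin n → Bool,
        finMax hn (fun i => if C i then Y i else Z i)) / 2 ^ n
      = (∑ j ∈ Finset.Icc 1 (jstar - 1), W j / 2 ^ j)
          + W jstar / 2 ^ (jstar - 1) :=
  prophet_expected_reward_general n hn Y Z hYZ hdistinct W hWanti hWrange ι hι jstar hjstar
end

section
/- In the setup below, for every arrival order π, the expected reward of the gambler over the randomness of the coin flips is at least Σ_{j=1}^{j*−2} W_j·2^{−(j+1)} + W_{j*−1}·2^{−(j*−1)}. -/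
open Finset

theorem card_filter_forall_mem_apply_eq {α β : Type*} [Fintype α] [DecidableEq α] [Fintype β]
    [DecidableEq β] (T : Finset α) (f : α → β) :
    #{C : α → β | ∀ i ∈ T, C i = f i} = Fintype.card β ^ (Fintype.card α - #T) := by
  have hpi : ({C : α → β | ∀ i ∈ T, C i = f i} : Finset _)
      = Fintype.piFinset fun i => if i ∈ T then {f i} else univ := by
    ext C
    simp only [mem_filter, mem_univ, true_and, Fintype.mem_piFinset]
    refine forall_congr' fun i => ?_
    split_ifs with hi <;> simp [hi]
  rw [hpi, Fintype.card_piFinset]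
  simp [apply_ite card, prod_ite, filter_not, card_univ_sdiff]

theorem card_eq_pow_of_mem_iff {α β γ : Type*} [Fintype α] [DecidableEq α] [Fintype β]
    [DecidableEq β] [Nonempty γ] {s : Finset γ} {ι : γ → α} (hι : Set.InjOn ι s) (b : γ → β)
    {E : Finset (α → β)} (hE : ∀ C, C ∈ E ↔ ∀ k ∈ s, C (ι k) = b k) :
    #E = Fintype.card β ^ (Fintype.card α - #s) := by
  rw [← card_image_of_injOn hι,
    ← card_filter_forall_mem_apply_eq _ fun i => b (Function.invFunOn ι s i)]
  congr 1
  ext C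
  simp only [hE, mem_filter, mem_univ, true_and, forall_mem_image]
  exact forall₂_congr fun k hk => by rw [hι.leftInvOn_invFunOn hk]

theorem sum_card_nsmul_le_sum {α κ M : Type*} [Fintype α] [AddCommMonoid M] [Preorder M]
    [AddLeftMono M] {s : Finset κ} {E : κ → Finset α} (hE : (s : Set κ).PairwiseDisjoint E)
    {R : α → M} {w : κ → M} (hR : ∀ a, 0 ≤ R a) (hw : ∀ i ∈ s, ∀ a ∈ E i, w i ≤ R a) :
    ∑ i ∈ s, #(E i) • w i ≤ ∑ a, R a := by
  classical
  calc ∑ i ∈ s, #(E i) • w i ≤ ∑ i ∈ s, ∑ a ∈ E i, R a :=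
        sum_le_sum fun i hi => card_nsmul_le_sum _ _ _ (hw i hi)
    _ = ∑ a ∈ s.biUnion E, R a := (sum_biUnion hE).symm
    _ ≤ ∑ a, R a := sum_le_sum_of_subset_of_nonneg (subset_univ _) fun a _ _ => hR a

section gamblerReward

variable {n : ℕ} (hn : 0 < n) (π : Equiv.Perm (Fin n)) {X Xt : Fin n → ℝ}

theorem gamblerReward_nonneg (hX : ∀ i, 0 ≤ X i) : 0 ≤ gamblerReward hn π X Xt := by
  unfold gamblerReward
  split_ifs
  exacts [hX _, le_rfl]

theorem exists_gamblerReward_eq (h : ∃ i, finMax hn Xt < X i) :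
    ∃ i, finMax hn Xt < X i ∧ gamblerReward hn π X Xt = X i := by
  obtain ⟨i, hi⟩ := h
  have hne : ({k | finMax hn Xt < X (π k)} : Finset (Fin n)).Nonempty :=
    ⟨π.symm i, by simpa using hi⟩
  refine ⟨_, (mem_filter.mp (min'_mem _ hne)).2, ?_⟩
  rw [gamblerReward, dif_pos hne]

theorem finMax_le_iff {a : ℝ} : finMax hn Xt ≤ a ↔ ∀ i, Xt i ≤ a := by
  simp [finMax]

theorem le_finMax (i : Fin n) : Xt i ≤ finMax hn Xt :=
  le_sup' Xt (mem_univ i)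

theorem le_gamblerReward_of_prefix {N j : ℕ} {W : ℕ → ℝ}
    (hW : StrictAntiOn W (Set.Icc 1 N)) (hX : ∀ i, X i ∈ (Icc 1 N).image W)
    (hXt : ∀ i, Xt i ∈ (Icc 1 N).image W) (hne : ∀ a b, X a ≠ Xt b) (hj : 1 ≤ j)
    (hjN : j + 1 ≤ N) (hpre : ∀ k ∈ Icc 1 j, ∃ i, X i = W k) (hnext : ∃ i, Xt i = W (j + 1)) :
    W j ≤ gamblerReward hn π X Xt := by
  have hmax : finMax hn Xt = W (j + 1) := by
    refine le_antisymm ((finMax_le_iff hn).2 fun i => ?_) ?_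
    · obtain ⟨m, hm, hWm⟩ := mem_image.1 (hXt i)
      have hjm : j + 1 ≤ m := by
        by_contra! hmj
        obtain ⟨a, ha⟩ := hpre m (by simp only [mem_Icc] at hm ⊢; omega)
        exact hne a i (ha.trans hWm)
      rw [← hWm]
      exact (hW.le_iff_ge (mem_Icc.1 hm) ⟨by omega, hjN⟩).2 hjm
    · obtain ⟨i, hi⟩ := hnext
      exact hi ▸ le_finMax hn i
  obtain ⟨a, ha⟩ := hpre 1 (by simp [hj])
  obtain ⟨i, hi, hRi⟩ := exists_gamblerReward_eq hn π
    ⟨a, show finMax hn Xt < X a by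
      rw [hmax, ha]; exact hW ⟨le_rfl, by omega⟩ ⟨by omega, hjN⟩ (by omega)⟩
  obtain ⟨m, hm, hWm⟩ := mem_image.1 (hX i)
  rw [hmax, ← hWm] at hi
  rw [hRi, ← hWm]
  have hmj := (hW.lt_iff_gt ⟨by omega, hjN⟩ (mem_Icc.1 hm)).1 hi
  exact (hW.le_iff_ge ⟨hj, by omega⟩ (mem_Icc.1 hm)).2 (by omega)

end gamblerReward

/-- The gambler's values are `X = coinValue Y Z C`, the threshold values `X̃ = coinValue Z Y C`. -/
def coinValue {α β : Type*} (Y Z : α → β) (C : α → Bool) (i : α) : β :=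
  if C i then Y i else Z i

section coinValue

variable {α β : Type*} {Y Z : α → β} {C : α → Bool} {i : α} {v : β}

theorem coinValue_eq_or (i : α) : coinValue Y Z C i = Y i ∨ coinValue Y Z C i = Z i := by
  unfold coinValue
  split_ifs <;> simp

theorem coinValue_ne_coinValue_swap (h : Function.Injective (Sum.elim Y Z)) (a b : α) :
    coinValue Y Z C a ≠ coinValue Z Y C b := by
  intro hab
  cases ha : C a <;> cases hb : C b <;> simp only [coinValue, ha, hb] at hab
  · exact Sum.inr_ne_inl (@h (.inr a) (.inl b) hab)
  · exact absurd (Sum.inr_injective (@h (.inr a) (.inr b) hab) ▸ ha) (by simp [hb])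
  · exact absurd (Sum.inl_injective (@h (.inl a) (.inl b) hab) ▸ ha) (by simp [hb])
  · exact Sum.inl_ne_inr (@h (.inl a) (.inr b) hab)

theorem coinValue_eq_iff (hv : v = Y i ∨ v = Z i) (hYZ : Y i ≠ Z i) [Decidable (v = Y i)] :
    coinValue Y Z C i = v ↔ C i = decide (v = Y i) := by
  unfold coinValue
  rcases hv with rfl | rfl <;> cases C i <;> simp [hYZ, hYZ.symm]

theorem coinValue_swap_eq_iff (hv : v = Y i ∨ v = Z i) (hYZ : Y i ≠ Z i) [Decidable (v = Y i)] :
    coinValue Z Y C i = v ↔ C i = !decide (v = Y i) := by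
  unfold coinValue
  rcases hv with rfl | rfl <;> cases C i <;> simp [hYZ, hYZ.symm]

theorem coinValue_swap_eq_of_ne (hv : v = Y i ∨ v = Z i) (h : coinValue Y Z C i ≠ v) :
    coinValue Z Y C i = v := by
  rcases hv with rfl | rfl <;> cases hc : C i <;> simp_all [coinValue]

theorem coinValue_ne_swap (h : Y i ≠ Z i) : coinValue Y Z C i ≠ coinValue Z Y C i := by
  unfold coinValue
  split_ifs
  exacts [h, h.symm]

theorem coinValue_of_forall {p : β → Prop} (hY : ∀ i, p (Y i)) (hZ : ∀ i, p (Z i)) (i : α) :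
    p (coinValue Y Z C i) := by
  rcases coinValue_eq_or (C := C) i with h | h <;> rw [h]
  exacts [hY i, hZ i]

end coinValue

theorem injOn_Icc_of_mem_lowerBounds {α : Type*} {ι : ℕ → α} {m N : ℕ} (hmN : m ≤ N)
    (hlow : m + 1 ∈ lowerBounds {j : ℕ | j ∈ Icc 1 N ∧ ∃ ℓ, 1 ≤ ℓ ∧ ℓ < j ∧ ι ℓ = ι j}) :
    Set.InjOn ι (Icc 1 m) := by
  intro a ha b hb hab
  simp only [coe_Icc, Set.mem_Icc] at ha hb
  by_contra hne
  rcases Nat.lt_or_gt_of_ne hne with h | h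
  · have := hlow ⟨mem_Icc.2 ⟨by omega, by omega⟩, a, ha.1, h, hab⟩
    omega
  · have := hlow ⟨mem_Icc.2 ⟨by omega, by omega⟩, b, hb.1, h, hab.symm⟩
    omega

def leadEvent {α β : Type*} [Fintype α] [DecidableEq α] [DecidableEq β] (Y Z : α → β)
    (W : ℕ → β) (ι : ℕ → α) (m j : ℕ) : Finset (α → Bool) :=
  {C | (∀ k ∈ (Icc 1 j : Finset ℕ), coinValue Y Z C (ι k) = W k) ∧
    (j < m → coinValue Z Y C (ι (j + 1)) = W (j + 1))}

section leadEvent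

variable {α β : Type*} [Fintype α] [DecidableEq α] [DecidableEq β] {Y Z : α → β} {W : ℕ → β}
  {ι : ℕ → α} {m : ℕ}

theorem card_leadEvent (hinj : Set.InjOn ι (Icc 1 m))
    (hW : ∀ k ∈ Icc 1 m, W k = Y (ι k) ∨ W k = Z (ι k)) (hYZ : ∀ i, Y i ≠ Z i) {j : ℕ}
    (hjm : j ≤ m) : #(leadEvent Y Z W ι m j) = 2 ^ (Fintype.card α - min (j + 1) m) := by
  set side : ℕ → Bool := fun k => decide (W k = Y (ι k))
  have hprefix (C : α → Bool) : (∀ k ∈ Icc 1 j, coinValue Y Z C (ι k) = W k) ↔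
      ∀ k ∈ Icc 1 j, C (ι k) = side k :=
    forall₂_congr fun k hk => coinValue_eq_iff (hW k (Icc_subset_Icc_right hjm hk)) (hYZ _)
  rcases hjm.lt_or_eq with hjm | rfl
  · rw [card_eq_pow_of_mem_iff (s := Icc 1 (j + 1))
      (hinj.mono (coe_subset.2 (Icc_subset_Icc_right hjm)))
      fun k => if k ≤ j then side k else !side k,
      Fintype.card_bool, Nat.card_Icc, Nat.add_sub_cancel, min_eq_left hjm]
    intro C
    have hnext : coinValue Z Y C (ι (j + 1)) = W (j + 1) ↔ C (ι (j + 1)) = !side (j + 1) :=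
      coinValue_swap_eq_iff (hW _ (mem_Icc.2 ⟨by omega, hjm⟩)) (hYZ _)
    rw [← insert_Icc_right_eq_Icc_add_one (by omega), forall_mem_insert, if_neg (by omega)]
    simp only [leadEvent, mem_filter, mem_univ, true_and, imp_iff_right hjm, hprefix, hnext]
    rw [and_comm]
    exact and_congr_right' (forall₂_congr fun k hk => by rw [if_pos (mem_Icc.1 hk).2])
  · rw [card_eq_pow_of_mem_iff hinj side, Fintype.card_bool, Nat.card_Icc,
      Nat.add_sub_cancel, min_eq_right (Nat.le_succ j)]
    intro C
    simp only [leadEvent, mem_filter, mem_univ, true_and, lt_irrefl, false_imp_iff, and_true,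
      hprefix]

theorem leadEvent_pairwiseDisjoint (hYZ : ∀ i, Y i ≠ Z i) :
    (Icc 1 m : Set ℕ).PairwiseDisjoint (leadEvent Y Z W ι m) := by
  have key : ∀ j j', j < j' → j' ≤ m → ∀ C, C ∈ leadEvent Y Z W ι m j →
      C ∉ leadEvent Y Z W ι m j' := by
    intro j j' hjj' hj' C hC hC'
    simp only [leadEvent, mem_filter, mem_univ, true_and] at hC hC'
    exact coinValue_ne_swap (hYZ _)
      ((hC'.1 (j + 1) (mem_Icc.2 ⟨by omega, hjj'⟩)).trans (hC.2 (by omega)).symm)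
  intro j hj j' hj' hne
  simp only [coe_Icc, Set.mem_Icc] at hj hj'
  rcases Nat.lt_or_gt_of_ne hne with h | h
  · exact disjoint_left.2 (key j j' h hj'.2)
  · exact disjoint_right.2 (key j' j h hj.2)

end leadEvent

theorem le_gamblerReward_of_mem_leadEvent {n N m j ℓ : ℕ} (hn : 0 < n) (π : Equiv.Perm (Fin n))
    {Y Z : Fin n → ℝ} {W : ℕ → ℝ} {ι : ℕ → Fin n} {C : Fin n → Bool}
    (hdistinct : Function.Injective (Sum.elim Y Z)) (hW : StrictAntiOn W (Set.Icc 1 N))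
    (hY : ∀ i, Y i ∈ (Icc 1 N).image W) (hZ : ∀ i, Z i ∈ (Icc 1 N).image W) (hmN : m + 1 ≤ N)
    (hℓ : ℓ ∈ Icc 1 m) (hιℓ : ι ℓ = ι (m + 1))
    (hpivot : W (m + 1) = Y (ι (m + 1)) ∨ W (m + 1) = Z (ι (m + 1)))
    (hj : j ∈ Icc 1 m) (hC : C ∈ leadEvent Y Z W ι m j) :
    W j ≤ gamblerReward hn π (coinValue Y Z C) (coinValue Z Y C) := by
  simp only [leadEvent, mem_filter, mem_univ, true_and] at hC
  rw [mem_Icc] at hj hℓ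
  refine le_gamblerReward_of_prefix hn π hW (coinValue_of_forall hY hZ)
    (coinValue_of_forall hZ hY) (coinValue_ne_coinValue_swap hdistinct) hj.1 (by omega)
    (fun k hk => ⟨ι k, hC.1 k hk⟩) ?_
  rcases hj.2.lt_or_eq with hjm | rfl
  · exact ⟨_, hC.2 hjm⟩
  -- `j = m`: the partner `W ℓ` of `W (m + 1)` is on the gambler's side
  refine ⟨ι (j + 1), coinValue_swap_eq_of_ne hpivot ?_⟩
  rw [← hιℓ, hC.1 ℓ (mem_Icc.2 hℓ)]
  exact (hW ⟨hℓ.1, by omega⟩ ⟨by omega, hmN⟩ (by omega)).ne'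

theorem sum_pow_sub_min_mul_eq {m n : ℕ} (hm : 1 ≤ m) (hmn : m ≤ n) (W : ℕ → ℝ) :
    ∑ j ∈ Icc 1 m, (2 : ℝ) ^ (n - min (j + 1) m) * W j
      = 2 ^ n * (∑ j ∈ Icc 1 (m - 1), W j / 2 ^ (j + 1) + W m / 2 ^ m) := by
  obtain ⟨m, rfl⟩ : ∃ k, m = k + 1 := ⟨m - 1, by omega⟩
  rw [sum_Icc_succ_top (by omega), Nat.add_sub_cancel, min_eq_right (Nat.le_succ _), mul_add,
    mul_sum, pow_sub₀ _ two_ne_zero hmn]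
  congr 1
  · refine sum_congr rfl fun j hj => ?_
    rw [min_eq_left (by simp only [mem_Icc] at hj; omega),
      pow_sub₀ _ two_ne_zero (by simp only [mem_Icc] at hj; omega)]
    ring
  · ring

/-- **Gambler's expected reward lower bound** (Proposition 3.4 of the paper).
With the `2n` distinct values `Y i > Z i ≥ 0` relabeled in decreasing order as
`W 1 > … > W (2n)` and pivotal index `jstar`, for every arrival order `π`, the
expectation over the `n` independent fair coin flips `C` (where `X i = Y i`,
`X̃ i = Z i` if `C i` is heads and `X i = Z i`, `X̃ i = Y i` otherwise) of the
gambler's reward (accepting the first arriving `X` value exceeding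
`max_i X̃ i`) is at least
`∑_{j=1}^{jstar-2} W j / 2^(j+1) + W (jstar-1) / 2^(jstar-1)`. -/
theorem gambler_expected_reward
    -- the `2n` values: `Y i > Z i ≥ 0` for each pair `i`, all distinct
    (n : ℕ) (hn : 0 < n) (Y Z : Fin n → ℝ)
    (hZnonneg : ∀ i, 0 ≤ Z i) (hYZ : ∀ i, Z i < Y i)
    (hdistinct : Function.Injective (Sum.elim Y Z))
    -- `W 1 > W 2 > … > W (2n)` is the decreasing relabeling of the `2n` values
    (W : ℕ → ℝ) (hWanti : StrictAntiOn W (Set.Icc 1 (2 * n)))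
    (hWrange : (Finset.Icc 1 (2 * n)).image W
      = Finset.univ.image Y ∪ Finset.univ.image Z)
    -- `ι j` is the index of the pair containing `W j`
    (ι : ℕ → Fin n)
    (hι : ∀ j ∈ Finset.Icc 1 (2 * n), W j = Y (ι j) ∨ W j = Z (ι j))
    -- `jstar` is the pivotal index: the least `j` whose pair index repeats an earlier one
    (jstar : ℕ)
    (hjstar : IsLeast {j : ℕ | j ∈ Finset.Icc 1 (2 * n)
      ∧ ∃ ℓ, 1 ≤ ℓ ∧ ℓ < j ∧ ι ℓ = ι j} jstar)
    (π : Equiv.Perm (Fin n)) :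
    (∑ j ∈ Finset.Icc 1 (jstar - 2), W j / 2 ^ (j + 1))
        + W (jstar - 1) / 2 ^ (jstar - 1)
      ≤ (∑ C : Fin n → Bool,
          gamblerReward hn π (fun i => if C i then Y i else Z i)
            (fun i => if C i then Z i else Y i)) / 2 ^ n := by
  obtain ⟨⟨hjN, ℓ, hℓ, hℓj, hιℓ⟩, hlow⟩ := hjstar
  obtain ⟨m, rfl⟩ : ∃ m, jstar = m + 1 := ⟨jstar - 1, by omega⟩
  rw [mem_Icc] at hjN
  have hinj := injOn_Icc_of_mem_lowerBounds (by omega) hlow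
  have hmn : m ≤ n := by simpa using card_le_card_of_injOn ι (fun k _ => mem_univ (ι k)) hinj
  have hYZ' i : Y i ≠ Z i := (hYZ i).ne'
  have hY i : Y i ∈ (Icc 1 (2 * n)).image W :=
    hWrange ▸ mem_union_left _ (mem_image_of_mem Y (mem_univ i))
  have hZ i : Z i ∈ (Icc 1 (2 * n)).image W :=
    hWrange ▸ mem_union_right _ (mem_image_of_mem Z (mem_univ i))
  have hsum := sum_card_nsmul_le_sum (leadEvent_pairwiseDisjoint (W := W) (ι := ι) hYZ')
    (fun C => gamblerReward_nonneg hn π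
      (coinValue_of_forall (C := C) (fun i => (hZnonneg i).trans (hYZ i).le) hZnonneg))
    (fun j hj C hC => le_gamblerReward_of_mem_leadEvent hn π hdistinct hWanti hY hZ hjN.2
      (mem_Icc.2 ⟨hℓ, by omega⟩) hιℓ (hι _ (mem_Icc.2 hjN)) hj hC)
  rw [le_div_iff₀ (by positivity), show m + 1 - 2 = m - 1 by omega, Nat.add_sub_cancel, mul_comm,
    ← sum_pow_sub_min_mul_eq (by omega) hmn]
  refine le_of_eq_of_le (sum_congr rfl fun j hj => ?_) hsum
  rw [card_leadEvent hinj (fun k hk => hι k (Icc_subset_Icc_right (by omega) hk)) hYZ'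
    (mem_Icc.1 hj).2, nsmul_eq_mul, Fintype.card_fin]
  push_cast
  rfl
end

section
/- Let X_1,…,X_n be independent real random variables, let ε > 0, and let σ_1,…,σ_n and τ_1,…,τ_n be thresholds with σ_i ≤ τ_i and Pr[X_i > τ_i] ≥ Pr[X_i > σ_i]/(1+ε)³ for every i. Let t_1 be the least index i with X_i > σ_i and t_2 the least index i with X_i > τ_i. Then for every real v: Pr[t_2 exists and X_{t_2} > v] ≥ (1+ε)^{−3} · Pr[t_1 exists and X_{t_1} > v]. -/
open MeasureTheory ProbabilityTheory

/-- The event that the threshold algorithm with thresholds `θ` stops (i.e. some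
`X i > θ i`) and the accepted value (the first `X i` exceeding `θ i`) is greater
than `v`. -/
def stopEvent {Ω : Type*} {n : ℕ} (X : Fin n → Ω → ℝ) (θ : Fin n → ℝ)
    (v : ℝ) : Set Ω :=
  {ω | ∃ h : (Finset.univ.filter (fun i => θ i < X i ω)).Nonempty,
    v < X ((Finset.univ.filter (fun i => θ i < X i ω)).min' h) ω}

/-- The event that the algorithm stops exactly at index `i` with value `> v`. -/
def stopSet {Ω : Type*} {n : ℕ} (X : Fin n → Ω → ℝ) (θ : Fin n → ℝ)
    (v : ℝ) (i : Fin n) : Set Ω :=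
  {ω | (∀ j, j < i → X j ω ≤ θ j) ∧ max (θ i) v < X i ω}

lemma stopEvent_eq_iUnion {Ω : Type*} {n : ℕ} (X : Fin n → Ω → ℝ) (θ : Fin n → ℝ)
    (v : ℝ) : stopEvent X θ v = ⋃ i, stopSet X θ v i := by
  ext ω
  constructor
  · rintro ⟨hne, hv⟩
    set s := Finset.univ.filter (fun i => θ i < X i ω) with hs
    refine Set.mem_iUnion.2 ⟨s.min' hne, ?_, ?_⟩
    · intro j hj
      by_contra hcon
      push_neg at hcon
      have hjs : j ∈ s := by simp [hs, hcon]
      exact absurd (Finset.min'_le s j hjs) (not_le.2 hj)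
    · have : s.min' hne ∈ s := Finset.min'_mem s hne
      simp only [hs, Finset.mem_filter] at this
      exact max_lt this.2 hv
  · intro hw
    obtain ⟨i, hlt, hmax⟩ := Set.mem_iUnion.1 hw
    set s := Finset.univ.filter (fun i => θ i < X i ω) with hs
    have his : i ∈ s := by
      simp only [hs, Finset.mem_filter, Finset.mem_univ, true_and]
      exact lt_of_le_of_lt (le_max_left _ _) hmax
    have hne : s.Nonempty := ⟨i, his⟩
    have hmin : s.min' hne = i := by
      have h1 : s.min' hne ≤ i := Finset.min'_le s i his
      rcases lt_or_eq_of_le h1 with h2 | h2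
      · exfalso
        have hmem : s.min' hne ∈ s := Finset.min'_mem s hne
        simp only [hs, Finset.mem_filter, Finset.mem_univ, true_and] at hmem
        exact absurd hmem (not_lt.2 (hlt _ h2))
      · exact h2
    exact ⟨hne, by rw [hmin]; exact lt_of_le_of_lt (le_max_right _ _) hmax⟩

lemma stopSet_disjoint {Ω : Type*} {n : ℕ} (X : Fin n → Ω → ℝ) (θ : Fin n → ℝ)
    (v : ℝ) : Pairwise (Function.onFun Disjoint (stopSet X θ v)) := by
  have key : ∀ i j : Fin n, i < j → Disjoint (stopSet X θ v i) (stopSet X θ v j) := by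
    intro i j hlt
    refine Set.disjoint_left.2 fun ω hi hj => ?_
    exact absurd (hj.1 i hlt) (not_le.2 (lt_of_le_of_lt (le_max_left _ _) hi.2))
  intro i j hij
  rcases hij.lt_or_gt with hlt | hlt
  · exact key i j hlt
  · exact (key j i hlt).symm

lemma meas_stopSet {Ω : Type*} [MeasurableSpace Ω] {P : Measure Ω} {n : ℕ}
    {X : Fin n → Ω → ℝ}
    (hXindep : iIndepFun X P)
    (θ : Fin n → ℝ) (v : ℝ) (i : Fin n) :
    P (stopSet X θ v i)
      = (∏ j ∈ Finset.Iio i, P {ω | X j ω ≤ θ j}) * P {ω | max (θ i) v < X i ω} := by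
  classical
  set T : Fin n → Set Ω := fun j =>
    if j = i then {ω | max (θ i) v < X i ω} else {ω | X j ω ≤ θ j} with hT
  have hset : stopSet X θ v i = ⋂ j ∈ insert i (Finset.Iio i), T j := by
    ext ω
    simp only [stopSet, Set.mem_setOf_eq, Set.mem_iInter, Finset.mem_insert,
      Finset.mem_Iio]
    constructor
    · rintro ⟨h1, h2⟩ j hj
      rcases eq_or_ne j i with hji | hji
      · simp only [hT, if_pos hji]; subst hji; exact h2
      · simp only [hT, if_neg hji]
        rcases hj with hj | hj
        · exact absurd hj hji
        · exact h1 j hj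
    · intro hall
      constructor
      · intro j hj
        have := hall j (Or.inr hj)
        simp only [hT, if_neg (ne_of_lt hj)] at this
        exact this
      · have := hall i (Or.inl rfl)
        simp only [hT, if_pos rfl] at this
        exact this
  have hmeas : ∀ j ∈ insert i (Finset.Iio i),
      MeasurableSet[(inferInstance : MeasurableSpace ℝ).comap (X j)] (T j) := by
    intro j hj
    by_cases hji : j = i
    · subst hji
      exact ⟨Set.Ioi (max (θ j) v), measurableSet_Ioi, by simp [hT, Set.preimage]⟩
    · exact ⟨Set.Iic (θ j), measurableSet_Iic, by simp [hT, hji, Set.preimage]⟩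
  have hTi : T i = {ω | max (θ i) v < X i ω} := by simp [hT]
  have hTj : ∀ j ∈ Finset.Iio i, T j = {ω | X j ω ≤ θ j} := fun j hj => by
    simp [hT, ne_of_lt (Finset.mem_Iio.1 hj)]
  rw [hset, hXindep.meas_biInter hmeas,
    Finset.prod_insert (by simp : i ∉ Finset.Iio i), hTi, mul_comm]
  congr 1
  exact Finset.prod_congr rfl fun j hj => by rw [hTj j hj]

lemma meas_stopEvent {Ω : Type*} [MeasurableSpace Ω] {P : Measure Ω} {n : ℕ}
    {X : Fin n → Ω → ℝ} (hXmeas : ∀ i, Measurable (X i))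
    (θ : Fin n → ℝ) (v : ℝ) :
    P (stopEvent X θ v) = ∑ i, P (stopSet X θ v i) := by
  have hmble : ∀ i, MeasurableSet (stopSet X θ v i) := by
    intro i
    have : stopSet X θ v i
        = (⋂ j ∈ Finset.Iio i, {ω | X j ω ≤ θ j}) ∩ {ω | max (θ i) v < X i ω} := by
      ext ω
      simp [stopSet, Set.mem_iInter, and_comm]
    rw [this]
    exact MeasurableSet.inter
      (MeasurableSet.biInter (Finset.Iio i).countable_toSet
        (fun j _ => measurableSet_le (hXmeas j) measurable_const))
      (measurableSet_lt measurable_const (hXmeas i))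
  rw [stopEvent_eq_iUnion, measure_iUnion (stopSet_disjoint X θ v) hmble, tsum_fintype]

/-- **Lemma 4.6 of the paper.** Let `X 1, …, X n` be independent real random
variables, `ε > 0`, and `σ i ≤ τ i` thresholds with
`Pr[X i > τ i] ≥ Pr[X i > σ i] / (1+ε)³` for every `i`. Letting `t 1` (resp.
`t 2`) be the stopping time of the algorithm accepting the first `X i`
exceeding `σ i` (resp. `τ i`), for every `v`,
`Pr[t 2 exists and X (t 2) > v] ≥ (1+ε)⁻³ · Pr[t 1 exists and X (t 1) > v]`. -/
theorem stopped_value_tail_comparable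
    {Ω : Type*} [MeasurableSpace Ω] (P : Measure Ω) [IsProbabilityMeasure P]
    (n : ℕ) (X : Fin n → Ω → ℝ) (hXmeas : ∀ i, Measurable (X i))
    (hXindep : iIndepFun X P)
    (ε : ℝ) (hε : 0 < ε) (σ τ : Fin n → ℝ) (hστ : ∀ i, σ i ≤ τ i)
    (h : ∀ i, (P {ω | σ i < X i ω}).toReal / (1 + ε) ^ 3
      ≤ (P {ω | τ i < X i ω}).toReal) :
    ∀ v : ℝ,
      ((1 + ε) ^ 3)⁻¹ * (P (stopEvent X σ v)).toReal
        ≤ (P (stopEvent X τ v)).toReal := by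
  intro v
  have hεpow : (0:ℝ) < (1 + ε) ^ 3 := by positivity
  set c : ℝ := ((1 + ε) ^ 3)⁻¹ with hc
  have hc0 : 0 ≤ c := by positivity
  have hc1 : c ≤ 1 := by
    rw [hc, inv_le_one_iff₀]
    right
    nlinarith [sq_nonneg ε, mul_pos (mul_pos hε hε) hε]
  -- real-valued components
  set p : (Fin n → ℝ) → Fin n → ℝ := fun θ i =>
    ∏ j ∈ Finset.Iio i, (P {ω | X j ω ≤ θ j}).toReal with hp
  set q : (Fin n → ℝ) → Fin n → ℝ := fun θ i =>
    (P {ω | max (θ i) v < X i ω}).toReal with hq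
  have htoReal : ∀ θ : Fin n → ℝ,
      (P (stopEvent X θ v)).toReal = ∑ i, p θ i * q θ i := by
    intro θ
    rw [meas_stopEvent hXmeas θ v, ENNReal.toReal_sum (fun i _ => measure_ne_top P _)]
    refine Finset.sum_congr rfl fun i _ => ?_
    rw [meas_stopSet hXindep θ v i, ENNReal.toReal_mul, ENNReal.toReal_prod]
  rw [htoReal σ, htoReal τ, Finset.mul_sum]
  refine Finset.sum_le_sum fun i _ => ?_
  have hpnonneg : ∀ θ i, 0 ≤ p θ i :=
    fun θ i => Finset.prod_nonneg fun j _ => ENNReal.toReal_nonneg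
  have hpq : p σ i ≤ p τ i := by
    refine Finset.prod_le_prod (fun j _ => ENNReal.toReal_nonneg) fun j _ => ?_
    refine ENNReal.toReal_mono (measure_ne_top P _) (measure_mono ?_)
    intro ω hw
    exact le_trans hw (hστ j)
  have hqq : c * q σ i ≤ q τ i := by
    by_cases hvτ : v ≤ τ i
    · have h1 : max (τ i) v = τ i := max_eq_left hvτ
      have h2 : q σ i ≤ (P {ω | σ i < X i ω}).toReal := by
        refine ENNReal.toReal_mono (measure_ne_top P _) (measure_mono ?_)
        intro ω hw
        simp only [Set.mem_setOf_eq] at hw ⊢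
        exact lt_of_le_of_lt (le_max_left _ _) hw
      calc c * q σ i ≤ c * (P {ω | σ i < X i ω}).toReal := by
            exact mul_le_mul_of_nonneg_left h2 hc0
        _ = (P {ω | σ i < X i ω}).toReal / (1 + ε) ^ 3 := by
            rw [hc, div_eq_mul_inv, mul_comm]
        _ ≤ (P {ω | τ i < X i ω}).toReal := h i
        _ = q τ i := by rw [hq]; simp [h1]
    · push_neg at hvτ
      have h1 : max (τ i) v = v := max_eq_right hvτ.le
      have h2 : max (σ i) v = v := max_eq_right (le_trans (hστ i) hvτ.le)
      have : q σ i = q τ i := by rw [hq]; simp [h1, h2]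
      rw [this]
      calc c * q τ i ≤ 1 * q τ i :=
            mul_le_mul_of_nonneg_right hc1 ENNReal.toReal_nonneg
        _ = q τ i := one_mul _
  calc c * (p σ i * q σ i) = p σ i * (c * q σ i) := by ring
    _ ≤ p τ i * q τ i :=
        mul_le_mul hpq hqq (mul_nonneg hc0 ENNReal.toReal_nonneg) (hpnonneg τ i)
end

section
/- Let X_1,…,X_n be independent nonnegative integrable real random variables, let ε > 0, and let σ_1,…,σ_n and τ_1,…,τ_n be thresholds with σ_i ≤ τ_i and Pr[X_i > τ_i] ≥ Pr[X_i > σ_i]/(1+ε)³ for every i. Let R_σ be the reward of the algorithm that stops at the least index i with X_i > σ_i and accepts X_i (with reward 0 if it never stops), and define R_τ analogously with the thresholds τ_i. Then E[R_τ] ≥ (1+ε)^{−3} · E[R_σ]. -/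
open MeasureTheory ProbabilityTheory

/-- The reward of the threshold algorithm with thresholds `θ`: it stops at the
least index `i` with `X i ω > θ i` and accepts the value `X i ω`; the reward is
`0` if it never stops. -/
noncomputable def thresholdReward {Ω : Type*} {n : ℕ} (X : Fin n → Ω → ℝ)
    (θ : Fin n → ℝ) (ω : Ω) : ℝ :=
  if h : (Finset.univ.filter (fun i => θ i < X i ω)).Nonempty then
    X ((Finset.univ.filter (fun i => θ i < X i ω)).min' h) ω
  else 0


noncomputable def gFun {Ω : Type*} {n : ℕ} (X : Fin n → Ω → ℝ) (θ : Fin n → ℝ) (i : Fin n) :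
    Ω → ℝ := {ω | θ i < X i ω}.indicator (X i)

def BSet {Ω : Type*} {n : ℕ} (X : Fin n → Ω → ℝ) (θ : Fin n → ℝ) (i : Fin n) : Set Ω :=
  {ω | ∀ j, j < i → X j ω ≤ θ j}

lemma reward_eq_sum {Ω : Type*} {n : ℕ} (X : Fin n → Ω → ℝ) (θ : Fin n → ℝ) (ω : Ω) :
    thresholdReward X θ ω = ∑ i, (BSet X θ i).indicator (gFun X θ i) ω := by
  classical
  unfold thresholdReward
  by_cases h : (Finset.univ.filter (fun i => θ i < X i ω)).Nonempty
  · rw [dif_pos h]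
    set m := (Finset.univ.filter (fun i => θ i < X i ω)).min' h with hm
    have hmmem : m ∈ Finset.univ.filter (fun i => θ i < X i ω) := Finset.min'_mem _ h
    have hmlt : θ m < X m ω := (Finset.mem_filter.mp hmmem).2
    rw [Finset.sum_eq_single_of_mem m (Finset.mem_univ m)]
    · have hB : ω ∈ BSet X θ m := by
        intro j hj
        by_contra hc
        push_neg at hc
        have : j ∈ Finset.univ.filter (fun i => θ i < X i ω) := by
          simp [hc]
        exact absurd (Finset.min'_le _ _ this) (not_le.mpr hj)
      rw [Set.indicator_of_mem hB, gFun,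
        Set.indicator_of_mem (show ω ∈ {ω | θ m < X m ω} from hmlt)]
    · intro i _ hne
      by_cases hi : θ i < X i ω
      · have : m ≤ i := Finset.min'_le _ _ (by simp [hi])
        have hmi : m < i := lt_of_le_of_ne this (Ne.symm hne)
        have : ω ∉ BSet X θ i := by
          intro hB
          exact absurd (hB m hmi) (not_le.mpr hmlt)
        rw [Set.indicator_of_notMem this]
      · rw [Set.indicator_apply, gFun,
          Set.indicator_of_notMem (show ω ∉ {ω | θ i < X i ω} from hi)]
        simp
  · rw [dif_neg h]
    symm
    apply Finset.sum_eq_zero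
    intro i _
    have hi : ¬ θ i < X i ω := by
      intro hi
      exact h ⟨i, by simp [hi]⟩
    rw [Set.indicator_apply, gFun,
      Set.indicator_of_notMem (show ω ∉ {ω | θ i < X i ω} from hi)]
    simp


lemma key_scalar {Ω : Type*} [MeasurableSpace Ω] (P : Measure Ω) [IsProbabilityMeasure P]
    (Y : Ω → ℝ) (hm : Measurable Y) (h0 : ∀ ω, 0 ≤ Y ω) (hint : Integrable Y P)
    (s t : ℝ) (hst : s ≤ t) (c : ℝ) (hc : 1 ≤ c)
    (hp : (P {ω | s < Y ω}).toReal / c ≤ (P {ω | t < Y ω}).toReal) :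
    ∫ ω, {ω | s < Y ω}.indicator Y ω ∂P ≤ c * ∫ ω, {ω | t < Y ω}.indicator Y ω ∂P := by
  have hcpos : (0:ℝ) < c := lt_of_lt_of_le one_pos hc
  set S : Set Ω := {ω | s < Y ω} with hS
  set A : Set Ω := {ω | t < Y ω} with hA
  have hSm : MeasurableSet S := measurableSet_lt measurable_const hm
  have hAm : MeasurableSet A := measurableSet_lt measurable_const hm
  have hAS : A ⊆ S := fun ω hω => lt_of_le_of_lt hst hω
  set D : Set Ω := S \ A with hD
  have hDm : MeasurableSet D := hSm.diff hAm
  set p := (P S).toReal with hp'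
  set q := (P A).toReal with hq'
  have hq0 : 0 ≤ q := ENNReal.toReal_nonneg
  have hPD : (P D).toReal = p - q := by
    rw [hD, measure_diff hAS hAm.nullMeasurableSet (measure_ne_top P A)]
    rw [ENNReal.toReal_sub_of_le (measure_mono hAS) (measure_ne_top P S)]
  set M := max t 0 with hM
  have hM0 : 0 ≤ M := le_max_right _ _
  -- split the integral
  have hsplit : ∫ ω, S.indicator Y ω ∂P = (∫ ω in A, Y ω ∂P) + ∫ ω in D, Y ω ∂P := by
    rw [integral_indicator hSm]
    have hunion : S = A ∪ D := by
      rw [hD, Set.union_diff_cancel hAS]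
    rw [hunion, setIntegral_union (Set.disjoint_sdiff_right) hDm
      (hint.integrableOn) (hint.integrableOn)]
  have hDbound : ∫ ω in D, Y ω ∂P ≤ M * (p - q) := by
    rw [← hPD]
    calc ∫ ω in D, Y ω ∂P ≤ ∫ _ in D, M ∂P := by
          apply setIntegral_mono_on hint.integrableOn (integrableOn_const (measure_ne_top P D)) hDm
          intro ω hω
          have : ¬ t < Y ω := hω.2
          exact le_trans (not_lt.mp this) (le_max_left _ _)
      _ = M * (P D).toReal := by rw [setIntegral_const, smul_eq_mul, mul_comm, measureReal_def]
  have hAbound : M * q ≤ ∫ ω in A, Y ω ∂P := by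
    calc M * q = ∫ _ in A, M ∂P := by rw [setIntegral_const, smul_eq_mul, mul_comm, measureReal_def]
      _ ≤ ∫ ω in A, Y ω ∂P := by
          apply setIntegral_mono_on (integrableOn_const (measure_ne_top P A))
            hint.integrableOn hAm
          intro ω hω
          exact max_le (le_of_lt hω) (h0 ω)
  have hAnn : 0 ≤ ∫ ω in A, Y ω ∂P := setIntegral_nonneg hAm (fun ω _ => h0 ω)
  have hpcq : p ≤ c * q := by
    rw [div_le_iff₀ hcpos] at hp
    linarith [hp]
  have : ∫ ω, S.indicator Y ω ∂P ≤ c * ∫ ω in A, Y ω ∂P := by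
    rw [hsplit]
    nlinarith [hDbound, hAbound, hAnn, hpcq, hM0, hq0]
  rwa [← integral_indicator hAm] at this

lemma BSet_measurable {Ω : Type*} [MeasurableSpace Ω] {n : ℕ} (X : Fin n → Ω → ℝ)
    (hXmeas : ∀ i, Measurable (X i)) (θ : Fin n → ℝ) (i : Fin n) :
    MeasurableSet (BSet X θ i) := by
  have : BSet X θ i = ⋂ (j : Fin n) (_ : j < i), {ω | X j ω ≤ θ j} := by
    ext ω; simp [BSet]
  rw [this]
  exact MeasurableSet.iInter fun j => MeasurableSet.iInter fun _ =>
    measurableSet_le (hXmeas j) measurable_const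

lemma factor_integral {Ω : Type*} [MeasurableSpace Ω] (P : Measure Ω) [IsProbabilityMeasure P]
    {n : ℕ} (X : Fin n → Ω → ℝ) (hXmeas : ∀ i, Measurable (X i))
    (hXint : ∀ i, Integrable (X i) P)
    (hXindep : iIndepFun X P)
    (θ : Fin n → ℝ) (i : Fin n) :
    ∫ ω, (BSet X θ i).indicator (gFun X θ i) ω ∂P
      = (∫ ω, gFun X θ i ω ∂P) * (P (BSet X θ i)).toReal := by
  classical
  have hSm : MeasurableSet {ω | θ i < X i ω} := measurableSet_lt measurable_const (hXmeas i)
  have hBm : MeasurableSet (BSet X θ i) := BSet_measurable X hXmeas θ i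
  set T : Finset (Fin n) := Finset.univ.filter (· < i) with hT
  have hdisj : Disjoint ({i} : Finset (Fin n)) T := by
    simp [hT, Finset.disjoint_left]
  have hbase := hXindep.indepFun_finset {i} T hdisj hXmeas
  have hi : i ∈ ({i} : Finset (Fin n)) := Finset.mem_singleton_self i
  set φ : (({i} : Finset (Fin n)) → ℝ) → ℝ :=
    fun v => {v : (({i} : Finset (Fin n)) → ℝ) | θ i < v ⟨i, hi⟩}.indicator (fun v => v ⟨i, hi⟩) v
    with hφ
  set ψ : (↥T → ℝ) → ℝ :=
    fun v => {v : (↥T → ℝ) | ∀ j : T, v j ≤ θ j}.indicator 1 v with hψ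
  have hφm : Measurable φ :=
    (measurable_pi_apply _).indicator (measurableSet_lt measurable_const (measurable_pi_apply _))
  have hψm : Measurable ψ := by
    apply measurable_const.indicator
    have : {v : (↥T → ℝ) | ∀ j : T, v j ≤ θ j}
        = ⋂ j : T, {v | v j ≤ θ (j : Fin n)} := by ext v; simp
    rw [this]
    exact MeasurableSet.iInter fun j => measurableSet_le (measurable_pi_apply _) measurable_const
  have hindep : IndepFun (gFun X θ i) ((BSet X θ i).indicator (1 : Ω → ℝ)) P := by
    have h1 : gFun X θ i = φ ∘ (fun a (j : ({i} : Finset (Fin n))) => X j a) := by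
      funext a
      simp only [Function.comp_apply, hφ, gFun, Set.indicator_apply, Set.mem_setOf_eq]
    have h2 : (BSet X θ i).indicator (1 : Ω → ℝ) = ψ ∘ (fun a (j : ↥T) => X j a) := by
      funext a
      simp only [Function.comp_apply, hψ, Set.indicator_apply, Set.mem_setOf_eq, Pi.one_apply]
      congr 1
      simp only [eq_iff_iff, BSet, Set.mem_setOf_eq]
      constructor
      · intro hb j
        refine hb (j : Fin n) ?_
        have hj := j.2
        exact (Finset.mem_filter.mp hj).2
      · intro hb j hj
        exact hb ⟨j, by simp [hT, hj]⟩
    rw [h1, h2]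
    exact hbase.comp hφm hψm
  have hgint : Integrable (gFun X θ i) P := (hXint i).indicator hSm
  have hindint : Integrable ((BSet X θ i).indicator (1 : Ω → ℝ)) P :=
    (integrable_const 1).indicator hBm
  have hprod : ∫ ω, gFun X θ i ω * (BSet X θ i).indicator (1 : Ω → ℝ) ω ∂P
      = (∫ ω, gFun X θ i ω ∂P) * ∫ ω, (BSet X θ i).indicator (1 : Ω → ℝ) ω ∂P :=
    hindep.integral_mul_eq_mul_integral hgint.aestronglyMeasurable hindint.aestronglyMeasurable
  have heq : (fun ω => (BSet X θ i).indicator (gFun X θ i) ω)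
      = fun ω => gFun X θ i ω * (BSet X θ i).indicator (1 : Ω → ℝ) ω := by
    funext ω
    by_cases hb : ω ∈ BSet X θ i <;> simp [Set.indicator_apply, hb]
  rw [heq, hprod, integral_indicator_one hBm, measureReal_def]

/-- Let `X 1, …, X n` be independent nonnegative integrable real random
variables, `ε > 0`, and `σ i ≤ τ i` thresholds with
`Pr[X i > τ i] ≥ Pr[X i > σ i] / (1+ε)³` for every `i`. Then the expected
reward of the threshold algorithm using the thresholds `τ` is at least
`(1+ε)⁻³` times the expected reward of the one using the thresholds `σ`. -/
theorem threshold_reward_comparable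
    {Ω : Type*} [MeasurableSpace Ω] (P : Measure Ω) [IsProbabilityMeasure P]
    (n : ℕ) (X : Fin n → Ω → ℝ) (hXmeas : ∀ i, Measurable (X i))
    (hXnonneg : ∀ i, ∀ ω, 0 ≤ X i ω) (hXint : ∀ i, Integrable (X i) P)
    (hXindep : iIndepFun X P)
    (ε : ℝ) (hε : 0 < ε) (σ τ : Fin n → ℝ) (hστ : ∀ i, σ i ≤ τ i)
    (h : ∀ i, (P {ω | σ i < X i ω}).toReal / (1 + ε) ^ 3
      ≤ (P {ω | τ i < X i ω}).toReal) :
    ((1 + ε) ^ 3)⁻¹ * ∫ ω, thresholdReward X σ ω ∂P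
      ≤ ∫ ω, thresholdReward X τ ω ∂P := by
  classical
  set c : ℝ := (1 + ε) ^ 3 with hc
  have hc1 : 1 ≤ c := one_le_pow₀ (by linarith)
  have hc0 : 0 < c := lt_of_lt_of_le one_pos hc1
  -- integral of the reward as a sum
  have hint_term : ∀ (θ : Fin n → ℝ) (i : Fin n),
      Integrable ((BSet X θ i).indicator (gFun X θ i)) P := fun θ i =>
    (((hXint i).indicator (measurableSet_lt measurable_const (hXmeas i))).indicator
      (BSet_measurable X hXmeas θ i))
  have hIR : ∀ θ : Fin n → ℝ, ∫ ω, thresholdReward X θ ω ∂P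
      = ∑ i, (∫ ω, gFun X θ i ω ∂P) * (P (BSet X θ i)).toReal := by
    intro θ
    have : ∫ ω, thresholdReward X θ ω ∂P
        = ∫ ω, ∑ i, (BSet X θ i).indicator (gFun X θ i) ω ∂P := by
      congr 1; funext ω; exact reward_eq_sum X θ ω
    rw [this, integral_finset_sum _ (fun i _ => hint_term θ i)]
    exact Finset.sum_congr rfl fun i _ =>
      factor_integral P X hXmeas hXint hXindep θ i
  rw [hIR σ, hIR τ, Finset.mul_sum]
  apply Finset.sum_le_sum
  intro i _
  have hgle : ∫ ω, gFun X σ i ω ∂P ≤ c * ∫ ω, gFun X τ i ω ∂P :=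
    key_scalar P (X i) (hXmeas i) (hXnonneg i) (hXint i) (σ i) (τ i) (hστ i) c hc1 (h i)
  have hgτnn : 0 ≤ ∫ ω, gFun X τ i ω ∂P :=
    integral_nonneg fun ω => Set.indicator_nonneg (fun ω _ => hXnonneg i ω) ω
  have hPle : (P (BSet X σ i)).toReal ≤ (P (BSet X τ i)).toReal := by
    apply ENNReal.toReal_mono (measure_ne_top P _)
    exact measure_mono fun ω hω j hj => le_trans (hω j hj) (hστ j)
  calc c⁻¹ * ((∫ ω, gFun X σ i ω ∂P) * (P (BSet X σ i)).toReal)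
      = (c⁻¹ * ∫ ω, gFun X σ i ω ∂P) * (P (BSet X σ i)).toReal := by ring
    _ ≤ (∫ ω, gFun X τ i ω ∂P) * (P (BSet X τ i)).toReal := by
        apply mul_le_mul _ hPle ENNReal.toReal_nonneg hgτnn
        rw [inv_mul_le_iff₀ hc0]
        exact hgle
end

section
/- In the setup below, suppose the coin flips are such that X_{ι(j)} = Z_{ι(j)} for every j < j* (i.e., the coin of the pair of W_j is tails for every j < j*). Then max_i X_i = W_{j*}. -/
/-!
Before the pivotal index every `W j` is the larger value `Y (ι j)` of its pair: were it the
smaller one, the larger one would come earlier and `j` would already repeat a pair index.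
Hence `W jstar` is the smaller value `Z p` of the pair `p = ι jstar`, whose larger value was
seen at some `ℓ < jstar`. If all coins before `jstar` are tails, then `X p = Z p = W jstar`,
and no `X i` is a `W j` with `j < jstar`, since such a value is a `Y` whose coin is tails.
-/

theorem finMax_eq_of_forall_le {n : ℕ} (hn : 0 < n) {f : Fin n → ℝ} {a : ℝ}
    (hle : ∀ i, f i ≤ a) {i : Fin n} (hi : f i = a) : finMax hn f = a :=
  le_antisymm (Finset.sup'_le _ _ fun k _ => hle k) (hi ▸ Finset.le_sup' f (Finset.mem_univ i))

namespace PivotalIndex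

variable {κ α : Type*} [LinearOrder α] {Y Z : κ → α} {W : ℕ → α} {ι : ℕ → κ} {N jstar : ℕ}

def repeatPositions (ι : ℕ → κ) (N : ℕ) : Set ℕ :=
  {j : ℕ | j ∈ Finset.Icc 1 N ∧ ∃ ℓ, 1 ≤ ℓ ∧ ℓ < j ∧ ι ℓ = ι j}

theorem eq_larger_of_lt_pivot (hYZ : ∀ i, Z i < Y i) (hYinj : Function.Injective Y)
    (hYneZ : ∀ a b, Y a ≠ Z b) (hW : StrictAntiOn W (Set.Icc 1 N))
    (hY : Set.range Y ⊆ W '' Set.Icc 1 N)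
    (hι : ∀ j ∈ Finset.Icc 1 N, W j = Y (ι j) ∨ W j = Z (ι j))
    (hjstar : jstar ∈ lowerBounds (repeatPositions ι N))
    {j : ℕ} (hj : j ∈ Finset.Icc 1 N) (hjlt : j < jstar) : W j = Y (ι j) := by
  refine (hι j hj).resolve_right fun hjZ => ?_
  obtain ⟨m, hm, hmY⟩ := hY (Set.mem_range_self (ι j))
  have hmj : m < j := (hW.lt_iff_gt (Finset.mem_Icc.1 hj) hm).1 (hjZ ▸ hmY ▸ hYZ (ι j))
  have hιm : ι m = ι j := by
    rcases hι m (Finset.mem_Icc.2 hm) with hmY' | hmZ'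
    · exact hYinj (hmY'.symm.trans hmY)
    · exact absurd (hmZ'.symm.trans hmY).symm (hYneZ _ _)
  exact hjlt.not_ge (hjstar ⟨hj, m, hm.1, hmj, hιm⟩)

theorem pivot_eq_smaller (hYZ : ∀ i, Z i < Y i) (hYinj : Function.Injective Y)
    (hYneZ : ∀ a b, Y a ≠ Z b) (hW : StrictAntiOn W (Set.Icc 1 N))
    (hY : Set.range Y ⊆ W '' Set.Icc 1 N)
    (hι : ∀ j ∈ Finset.Icc 1 N, W j = Y (ι j) ∨ W j = Z (ι j))
    (hjstar : IsLeast (repeatPositions ι N) jstar) : W jstar = Z (ι jstar) := by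
  obtain ⟨⟨hjN, ℓ, hℓ1, hℓj, hℓι⟩, hmin⟩ := hjstar
  have hℓN : ℓ ∈ Finset.Icc 1 N :=
    Finset.mem_Icc.2 ⟨hℓ1, hℓj.le.trans (Finset.mem_Icc.1 hjN).2⟩
  have hℓY : W ℓ = Y (ι jstar) :=
    hℓι ▸ eq_larger_of_lt_pivot hYZ hYinj hYneZ hW hY hι hmin hℓN hℓj
  refine (hι jstar hjN).resolve_left fun hjY => hℓj.ne ?_
  exact hW.injOn (Finset.mem_Icc.1 hℓN) (Finset.mem_Icc.1 hjN) (hℓY.trans hjY.symm)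

theorem le_pivot_of_tails (hYZ : ∀ i, Z i < Y i) (hYinj : Function.Injective Y)
    (hYneZ : ∀ a b, Y a ≠ Z b) (hW : StrictAntiOn W (Set.Icc 1 N))
    (hY : Set.range Y ⊆ W '' Set.Icc 1 N)
    (hι : ∀ j ∈ Finset.Icc 1 N, W j = Y (ι j) ∨ W j = Z (ι j))
    (hjstar : IsLeast (repeatPositions ι N) jstar)
    {X : κ → α} (hX : ∀ i, X i = Y i ∨ X i = Z i) (hXW : Set.range X ⊆ W '' Set.Icc 1 N)
    (htails : ∀ j, 1 ≤ j → j < jstar → X (ι j) = Z (ι j)) (i : κ) :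
    X i ≤ W jstar := by
  obtain ⟨j, hj, hjX⟩ := hXW (Set.mem_range_self i)
  rw [← hjX]
  refine (lt_or_ge j jstar).elim (fun hjlt => ?_) fun hge =>
    hW.antitoneOn (Finset.mem_Icc.1 hjstar.1.1) hj hge
  have hjY : X i = Y (ι j) :=
    hjX ▸ eq_larger_of_lt_pivot hYZ hYinj hYneZ hW hY hι hjstar.2 (Finset.mem_Icc.2 hj) hjlt
  exfalso
  rcases hX i with hXY | hXZ
  · obtain rfl : i = ι j := hYinj (hXY.symm.trans hjY)
    exact (hYZ (ι j)).ne (hXY.symm.trans (htails j hj.1 hjlt)).symm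
  · exact hYneZ _ _ (hXZ.symm.trans hjY).symm

end PivotalIndex

theorem prophet_all_tails_case_general
    -- the `2n` values: `Y i > Z i ≥ 0` for each pair `i`, all distinct
    (n : ℕ) (hn : 0 < n) (Y Z : Fin n → ℝ)
    (hYZ : ∀ i, Z i < Y i)
    (hdistinct : Function.Injective (Sum.elim Y Z))
    -- `W 1 > W 2 > … > W (2n)` is the decreasing relabeling of the `2n` values
    (W : ℕ → ℝ) (hWanti : StrictAntiOn W (Set.Icc 1 (2 * n)))
    (hWrange : (Finset.Icc 1 (2 * n)).image W
      = Finset.univ.image Y ∪ Finset.univ.image Z)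
    -- `ι j` is the index of the pair containing `W j`
    (ι : ℕ → Fin n)
    (hι : ∀ j ∈ Finset.Icc 1 (2 * n), W j = Y (ι j) ∨ W j = Z (ι j))
    -- `jstar` is the pivotal index: the least `j` whose pair index repeatPositions an earlier one
    (jstar : ℕ)
    (hjstar : IsLeast {j : ℕ | j ∈ Finset.Icc 1 (2 * n)
      ∧ ∃ ℓ, 1 ≤ ℓ ∧ ℓ < j ∧ ι ℓ = ι j} jstar)
    (C : Fin n → Bool)
    (htails : ∀ j, 1 ≤ j → j < jstar →
      (if C (ι j) then Y (ι j) else Z (ι j)) = Z (ι j)) :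
    finMax hn (fun i => if C i then Y i else Z i) = W jstar := by
  obtain ⟨hYinj, -, hYneZ⟩ := Sum.elim_injective.1 hdistinct
  have hrange : W '' Set.Icc 1 (2 * n) = Set.range Y ∪ Set.range Z := by
    simpa only [Finset.coe_image, Finset.coe_union, Finset.coe_Icc, Finset.coe_univ,
      Set.image_univ] using congrArg ((↑) : Finset ℝ → Set ℝ) hWrange
  have hY : Set.range Y ⊆ W '' Set.Icc 1 (2 * n) := hrange ▸ Set.subset_union_left
  have hXW : Set.range (fun i => if C i then Y i else Z i) ⊆ W '' Set.Icc 1 (2 * n) :=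
    hrange ▸ Set.range_ite_subset
  have hX (i : Fin n) :
      (if C i then Y i else Z i) = Y i ∨ (if C i then Y i else Z i) = Z i := by
    cases C i <;> simp
  obtain ⟨ℓ, hℓ1, hℓj, hℓι⟩ := hjstar.1.2
  refine finMax_eq_of_forall_le hn (i := ι jstar)
    (PivotalIndex.le_pivot_of_tails hYZ hYinj hYneZ hWanti hY hι hjstar hX hXW htails) ?_
  rw [PivotalIndex.pivot_eq_smaller hYZ hYinj hYneZ hWanti hY hι hjstar, ← hℓι]
  exact htails ℓ hℓ1 hℓj

/-- **The all-tails case of Proposition 3.3.** In the setup of the single-sample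
analysis, if the coin flips `C` are such that `X (ι j) = Z (ι j)` for every
`j < jstar` (i.e., the coin of the pair of `W j` is tails for every `j` before
the pivotal index), then `max_i X i = W jstar`, where
`X i = Y i` if `C i` and `X i = Z i` otherwise. -/
theorem prophet_all_tails_case
    -- the `2n` values: `Y i > Z i ≥ 0` for each pair `i`, all distinct
    (n : ℕ) (hn : 0 < n) (Y Z : Fin n → ℝ)
    (hZnonneg : ∀ i, 0 ≤ Z i) (hYZ : ∀ i, Z i < Y i)
    (hdistinct : Function.Injective (Sum.elim Y Z))
    -- `W 1 > W 2 > … > W (2n)` is the decreasing relabeling of the `2n` values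
    (W : ℕ → ℝ) (hWanti : StrictAntiOn W (Set.Icc 1 (2 * n)))
    (hWrange : (Finset.Icc 1 (2 * n)).image W
      = Finset.univ.image Y ∪ Finset.univ.image Z)
    -- `ι j` is the index of the pair containing `W j`
    (ι : ℕ → Fin n)
    (hι : ∀ j ∈ Finset.Icc 1 (2 * n), W j = Y (ι j) ∨ W j = Z (ι j))
    -- `jstar` is the pivotal index: the least `j` whose pair index repeats an earlier one
    (jstar : ℕ)
    (hjstar : IsLeast {j : ℕ | j ∈ Finset.Icc 1 (2 * n)
      ∧ ∃ ℓ, 1 ≤ ℓ ∧ ℓ < j ∧ ι ℓ = ι j} jstar)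
    (C : Fin n → Bool)
    (htails : ∀ j, 1 ≤ j → j < jstar →
      (if C (ι j) then Y (ι j) else Z (ι j)) = Z (ι j)) :
    finMax hn (fun i => if C i then Y i else Z i) = W jstar :=
  prophet_all_tails_case_general n hn Y Z hYZ hdistinct W hWanti hWrange ι hι jstar hjstar C htails
end
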